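/- arXiv:2510.11723 — 6 statements merged into one kernel-verified Lean document; each statement's English description precedes it below -/
import Mathlib

section
/- Let p > q ≥ 1 be coprime integers. For every nonnegative integer n there is exactly one digit word u over {0,…,p−1} that is empty or has nonzero leading digit and satisfies val_{p/q}(u) = n; equivalently, val_{p/q} restricts to a bijection from L_{p/q} onto the nonnegative integers. -/
/-- The valuation in base `p/q` of a digit word (most significant digit first):
`val_{p/q}(a_k ⋯ a_0) = (1/q) ∑ a_i (p/q)^i`, with `val(ε) = 0`. -/
def ratVal (p q : ℕ) (w : List ℕ) : ℚ :=
  w.foldl (fun x a => (p : ℚ) / q * x + (a : ℚ) / q) 0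

/-- Membership in the language `L_{p/q}`: all letters lie in `{0,…,p-1}`, the valuation
is a nonnegative integer, and the word is empty or has nonzero leading digit. -/
def InLang (p q : ℕ) (w : List ℕ) : Prop :=
  (∀ a ∈ w, a < p) ∧ (∃ n : ℕ, ratVal p q w = n) ∧ w.head? ≠ some 0

lemma ratVal_nil (p q : ℕ) : ratVal p q [] = 0 := rfl

lemma ratVal_concat (p q : ℕ) (w : List ℕ) (a : ℕ) :
    ratVal p q (w ++ [a]) = (p : ℚ) / q * ratVal p q w + (a : ℚ) / q := by
  simp [ratVal, List.foldl_append]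

lemma ratVal_nonneg (p q : ℕ) (w : List ℕ) : 0 ≤ ratVal p q w := by
  induction w using List.reverseRecOn with
  | nil => simp [ratVal]
  | append_singleton l a ih =>
    rw [ratVal_concat]
    have h1 : 0 ≤ (p : ℚ) / q := by positivity
    have h2 : 0 ≤ (a : ℚ) / q := by positivity
    nlinarith

lemma ratVal_pow_int (p q : ℕ) (hq : 1 ≤ q) (w : List ℕ) :
    ∃ m : ℕ, (q : ℚ) ^ w.length * ratVal p q w = m := by
  induction w using List.reverseRecOn with
  | nil => exact ⟨0, by simp [ratVal]⟩
  | append_singleton l a ih =>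
    obtain ⟨m, hm⟩ := ih
    have hq0 : (q : ℚ) ≠ 0 := by positivity
    refine ⟨p * m + a * q ^ l.length, ?_⟩
    have key : (q : ℚ) ^ (l ++ [a]).length * ratVal p q (l ++ [a])
        = p * ((q : ℚ) ^ l.length * ratVal p q l) + a * (q : ℚ) ^ l.length := by
      rw [ratVal_concat]
      simp only [List.length_append, List.length_singleton]
      field_simp
      ring
    rw [key, hm]
    push_cast
    ring

lemma ratVal_zero_all_zero (p q : ℕ) (hq : 1 ≤ q) (hp : 0 < p) (w : List ℕ)
    (h : ratVal p q w = 0) : ∀ a ∈ w, a = 0 := by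
  induction w using List.reverseRecOn with
  | nil => simp
  | append_singleton l a ih =>
    rw [ratVal_concat] at h
    have hv : 0 ≤ ratVal p q l := ratVal_nonneg p q l
    have hpq0 : 0 < (p : ℚ) / q := by positivity
    have ha0 : 0 ≤ (a : ℚ) / q := by positivity
    have hq0 : (0:ℚ) < q := by positivity
    have hvz : ratVal p q l = 0 := by nlinarith
    have haz : (a : ℚ) / q = 0 := by nlinarith
    have ha : a = 0 := by
      field_simp at haz
      exact_mod_cast haz
    intro b hb
    rcases List.mem_append.1 hb with hb | hb
    · exact ih hvz b hb
    · simp at hb; omega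

/-- Greedy expansion of `n` in base `p/q` (most significant digit first). -/
def rep (p q : ℕ) : ℕ → List ℕ
  | 0 => []
  | n+1 => rep p q (min n (q * (n+1) / p)) ++ [q * (n+1) % p]
  decreasing_by omega

lemma rep_div_le (p q : ℕ) (hpq : q < p) (n : ℕ) : q * (n+1) / p ≤ n := by
  have hp : 0 < p := by omega
  have h1 : q * (n+1) < (n+1) * p := by nlinarith
  have h2 : q * (n+1) / p < n + 1 := (Nat.div_lt_iff_lt_mul hp).mpr h1
  omega

lemma rep_succ (p q : ℕ) (hpq : q < p) (n : ℕ) :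
    rep p q (n+1) = rep p q (q * (n+1) / p) ++ [q * (n+1) % p] := by
  rw [rep, Nat.min_eq_right (rep_div_le p q hpq n)]

lemma rep_val (p q : ℕ) (hq : 1 ≤ q) (hpq : q < p) : ∀ n, ratVal p q (rep p q n) = n := by
  intro n
  induction n using Nat.strong_induction_on with
  | _ n ih =>
    match n with
    | 0 => simp [rep, ratVal]
    | n+1 =>
      rw [rep_succ p q hpq, ratVal_concat,
        ih (q * (n+1) / p) (by have := rep_div_le p q hpq n; omega)]
      have hd := Nat.div_add_mod (q * (n+1)) p
      have hq0 : (q : ℚ) ≠ 0 := by positivity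
      have hp0 : (p : ℚ) ≠ 0 := by
        have : 0 < p := by omega
        positivity
      have hd' : (p : ℚ) * ((q*(n+1)/p : ℕ) : ℚ) + ((q*(n+1)%p : ℕ) : ℚ) = (q:ℚ) * ((n:ℚ)+1) := by
        exact_mod_cast congrArg (Nat.cast (R := ℚ)) hd
      field_simp
      push_cast
      linarith [hd']

lemma rep_digits (p q : ℕ) (hpq : q < p) : ∀ n, ∀ a ∈ rep p q n, a < p := by
  intro n
  induction n using Nat.strong_induction_on with
  | _ n ih =>
    match n with
    | 0 => simp [rep]
    | n+1 =>
      rw [rep_succ p q hpq]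
      intro a ha
      rcases List.mem_append.1 ha with ha | ha
      · exact ih (q * (n+1) / p) (by have := rep_div_le p q hpq n; omega) a ha
      · simp at ha
        subst ha
        exact Nat.mod_lt _ (by omega)

lemma rep_ne_nil (p q : ℕ) (hpq : q < p) (n : ℕ) (hn : 0 < n) : rep p q n ≠ [] := by
  match n with
  | n+1 => rw [rep_succ p q hpq]; simp

lemma rep_head (p q : ℕ) (hq : 1 ≤ q) (hpq : q < p) : ∀ n, (rep p q n).head? ≠ some 0 := by
  intro n
  induction n using Nat.strong_induction_on with
  | _ n ih =>
    match n with
    | 0 => simp [rep]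
    | n+1 =>
      rw [rep_succ p q hpq]
      by_cases hd : q * (n+1) / p = 0
      · have hlt : q * (n+1) < p := by
          have h1 := Nat.div_add_mod (q * (n+1)) p
          have h2 := Nat.mod_lt (q * (n+1)) (show 0 < p by omega)
          rw [hd] at h1
          omega
        rw [hd, rep]
        simp only [List.nil_append, List.head?_cons]
        have : q * (n+1) % p = q * (n+1) := Nat.mod_eq_of_lt hlt
        rw [this]
        intro hcontra
        simp at hcontra
        nlinarith
      · have hne := rep_ne_nil p q hpq _ (Nat.pos_of_ne_zero hd)
        have hih := ih (q * (n+1) / p) (by have := rep_div_le p q hpq n; omega)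
        cases hrep : rep p q (q * (n+1) / p) with
        | nil => exact absurd hrep hne
        | cons c t =>
          rw [hrep] at hih
          simpa using hih

lemma canonical (p q : ℕ) (hq : 1 ≤ q) (hpq : q < p) (hco : Nat.Coprime p q) :
    ∀ n : ℕ, ∀ w : List ℕ, (∀ a ∈ w, a < p) → ratVal p q w = n →
      w.head? ≠ some 0 → w = rep p q n := by
  intro n
  induction n using Nat.strong_induction_on with
  | _ n ih =>
    intro w hdig hval hhead
    have hp : 0 < p := by omega
    match n with
    | 0 =>
      cases w with
      | nil => simp [rep]
      | cons c t =>
        exfalso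
        have hz : ratVal p q (c :: t) = 0 := by rw [hval]; simp
        have hc : c = 0 := ratVal_zero_all_zero p q hq hp _ hz c (by simp)
        apply hhead
        simp [hc]
    | n+1 =>
      rcases List.eq_nil_or_concat w with rfl | ⟨l, a, rfl⟩
      · exfalso
        rw [ratVal_nil] at hval
        have : (0:ℕ) = n + 1 := by exact_mod_cast hval
        omega
      · rw [List.concat_eq_append] at *
        have hq0 : (q : ℚ) ≠ 0 := by positivity
        have hp0 : (p : ℚ) ≠ 0 := by positivity
        rw [ratVal_concat] at hval
        set v := ratVal p q l with hv
        have hvnn : 0 ≤ v := ratVal_nonneg p q l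
        have heq : (p : ℚ) * v + a = q * (n+1) := by
          field_simp at hval
          push_cast at hval
          linarith
        -- a ≤ q*(n+1)
        have hale : a ≤ q * (n+1) := by
          have : (a : ℚ) ≤ (q * (n+1) : ℕ) := by push_cast; nlinarith
          exact_mod_cast this
        set t := q * (n+1) - a with ht
        have htq : (t : ℚ) = p * v := by
          have : (t : ℚ) = (q * (n+1) : ℕ) - a := by
            rw [ht]; push_cast [Nat.cast_sub hale]; ring
          rw [this]; push_cast; linarith
        obtain ⟨m, hm⟩ := ratVal_pow_int p q hq l
        have hdvd : p ∣ t := by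
          have hkey : (q ^ l.length * t : ℕ) = (p * m : ℕ) := by
            have : ((q:ℚ)) ^ l.length * t = p * m := by
              rw [htq, ← hm]; ring
            exact_mod_cast this
          have : p ∣ q ^ l.length * t := ⟨m, hkey.symm ▸ rfl⟩
          exact (Nat.Coprime.pow_right l.length hco).dvd_of_dvd_mul_left this
        obtain ⟨k, hk⟩ := hdvd
        have hvk : v = (k : ℚ) := by
          have : (p : ℚ) * v = p * k := by
            rw [← htq, hk]; push_cast; ring
          exact mul_left_cancel₀ hp0 this
        -- Euclidean division facts
        have heuclid : p * k + a = q * (n+1) := by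
          have : (p * k + a : ℚ) = (q * (n+1) : ℚ) := by
            rw [← hvk]; push_cast at heq ⊢; linarith
          exact_mod_cast this
        have halt : a < p := hdig a (by simp)
        have hdm := (Nat.div_mod_unique hp (a := q*(n+1)) (d := k) (c := a)).2
          ⟨by linarith, halt⟩
        have hdiv : q * (n+1) / p = k := hdm.1
        have hmod : q * (n+1) % p = a := hdm.2
        -- k < n+1
        have hklt : k < n + 1 := by
          have h1 : p * k < p * (n+1) := by nlinarith
          exact Nat.lt_of_mul_lt_mul_left h1
        -- head condition for l
        have hlhead : l.head? ≠ some 0 := by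
          cases l with
          | nil => simp
          | cons c t' => simpa using hhead
        have hl := ih k hklt l (fun b hb => hdig b (by simp [hb]))
          (by rw [← hv, hvk]) hlhead
        rw [rep_succ p q hpq, hdiv, hmod, hl]

/-- For coprime `p > q ≥ 1`, every nonnegative integer `n` has exactly one expansion:
a unique digit word `u` (empty or with nonzero leading digit) with `val_{p/q}(u) = n`;
i.e. `val_{p/q}` restricts to a bijection from `L_{p/q}` onto ℕ. -/
theorem stmt0 (p q : ℕ) (hq : 1 ≤ q) (hpq : q < p) (hco : Nat.Coprime p q) (n : ℕ) :
    ∃! u : List ℕ, InLang p q u ∧ ratVal p q u = n := by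
  refine ⟨rep p q n, ⟨⟨rep_digits p q hpq n, ⟨n, rep_val p q hq hpq n⟩,
    rep_head p q hq hpq n⟩, rep_val p q hq hpq n⟩, ?_⟩
  rintro w ⟨⟨h1, -, h3⟩, h4⟩
  exact canonical p q hq hpq hco n w h1 h4 h3
end

section
/- Let p > q ≥ 1 be coprime integers. For every u ∈ L_{p/q} and every natural number l, the word wmin_{p/q}(u,l) is a prefix of wmin_{p/q}(u,l+1), and the word wmax_{p/q}(u,l) is a prefix of wmax_{p/q}(u,l+1). -/
/-- `v` is the lexicographically least word of length `l` over `{0,…,p-1}`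
such that `u ++ v ∈ L_{p/q}`. -/
def IsWmin (p q : ℕ) (u : List ℕ) (l : ℕ) (v : List ℕ) : Prop :=
  v.length = l ∧ InLang p q (u ++ v) ∧
    ∀ v' : List ℕ, v'.length = l → InLang p q (u ++ v') →
      ¬ List.Lex (· < · : ℕ → ℕ → Prop) v' v

/-- `v` is the lexicographically greatest word of length `l` over `{0,…,p-1}`
such that `u ++ v ∈ L_{p/q}`. -/
def IsWmax (p q : ℕ) (u : List ℕ) (l : ℕ) (v : List ℕ) : Prop :=
  v.length = l ∧ InLang p q (u ++ v) ∧
    ∀ v' : List ℕ, v'.length = l → InLang p q (u ++ v') →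
      ¬ List.Lex (· < · : ℕ → ℕ → Prop) v v'

lemma ratVal_snoc (p q : ℕ) (w : List ℕ) (a : ℕ) :
    ratVal p q (w ++ [a]) = (p:ℚ)/q * ratVal p q w + (a:ℚ)/q := by
  simp [ratVal, List.foldl_append]

lemma ratVal_nonneg_aux (p q : ℕ) (w : List ℕ) : ∀ x : ℚ, 0 ≤ x →
    0 ≤ w.foldl (fun x a => (p : ℚ) / q * x + (a : ℚ) / q) x := by
  induction w with
  | nil => intro x hx; simpa
  | cons b t ih =>
    intro x hx
    apply ih
    have h1 : 0 ≤ (p:ℚ)/q * x := by positivity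
    have h2 : 0 ≤ (b:ℚ)/q := by positivity
    linarith

lemma ratVal_den (p q : ℕ) (hq : 1 ≤ q) (w : List ℕ) :
    ∃ z : ℤ, (q:ℚ)^w.length * ratVal p q w = z := by
  induction w using List.reverseRecOn with
  | nil => exact ⟨0, by simp [ratVal]⟩
  | append_singleton t a ih =>
    obtain ⟨z, hz⟩ := ih
    refine ⟨p * z + a * q^t.length, ?_⟩
    have hq0 : (q:ℚ) ≠ 0 := by
      simp only [ne_eq, Nat.cast_eq_zero]; omega
    rw [ratVal_snoc]
    push_cast
    rw [← hz]
    simp only [List.length_append, List.length_singleton]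
    field_simp
    ring

lemma int_of_mul (p q k : ℕ) (hp : 0 < p) (hco : Nat.Coprime p q) (x : ℚ)
    (m z : ℤ) (h1 : (p:ℚ) * x = m) (h2 : (q:ℚ)^k * x = z) (hx : 0 ≤ x) :
    ∃ n : ℕ, x = n := by
  have hpq : IsCoprime (p:ℤ) ((q:ℤ)^k) :=
    (Nat.isCoprime_iff_coprime.mpr hco).pow_right
  have hmz : m * (q:ℤ)^k = (p:ℤ) * z := by
    have : (m:ℚ) * (q:ℚ)^k = (p:ℚ) * z := by rw [← h1, ← h2]; ring
    exact_mod_cast this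
  have hdvd : (p:ℤ) ∣ m := hpq.dvd_of_dvd_mul_right ⟨z, hmz⟩
  obtain ⟨m', rfl⟩ := hdvd
  have hp0 : (p:ℚ) ≠ 0 := by simp only [ne_eq, Nat.cast_eq_zero]; omega
  have hx' : x = (m' : ℚ) := by
    push_cast at h1
    have : (p:ℚ) * x = (p:ℚ) * m' := by linarith
    exact mul_left_cancel₀ hp0 this
  have hm' : 0 ≤ m' := by
    rw [hx'] at hx; exact_mod_cast hx
  exact ⟨m'.toNat, by rw [hx']; exact_mod_cast (Int.toNat_of_nonneg hm').symm⟩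

lemma lex_append {v w : List ℕ} (h : List.Lex (· < ·) v w) :
    v.length = w.length → ∀ s t : List ℕ, List.Lex (· < ·) (v ++ s) (w ++ t) := by
  induction h with
  | nil => intro hlen; simp at hlen
  | cons h ih =>
    intro hlen s t
    exact List.Lex.cons (ih (by simpa using hlen) s t)
  | rel h =>
    intro _ s t
    exact List.Lex.rel h

lemma lex_trichotomy : ∀ (v w : List ℕ), v.length = w.length →
    v = w ∨ List.Lex (· < ·) v w ∨ List.Lex (· < ·) w v
  | [], [], _ => Or.inl rfl
  | [], _::_, h => by simp at h
  | _::_, [], h => by simp at h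
  | a::s, b::t, h => by
    rcases lt_trichotomy a b with hab|rfl|hab
    · exact Or.inr (Or.inl (List.Lex.rel hab))
    · rcases lex_trichotomy s t (by simpa using h) with rfl|h'|h'
      · exact Or.inl rfl
      · exact Or.inr (Or.inl (List.Lex.cons h'))
      · exact Or.inr (Or.inr (List.Lex.cons h'))
    · exact Or.inr (Or.inr (List.Lex.rel hab))

lemma exists_ext (p q : ℕ) (hq : 1 ≤ q) (hpq : q < p) (w : List ℕ)
    (hw : InLang p q w) : ∃ a : ℕ, a < p ∧ InLang p q (w ++ [a]) := by
  obtain ⟨hdig, ⟨n, hn⟩, hhead⟩ := hw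
  have hr : p * n % q < q := Nat.mod_lt _ (by omega)
  refine ⟨q - p * n % q, by omega, ?_, ⟨p * n / q + 1, ?_⟩, ?_⟩
  · intro a ha
    rcases List.mem_append.mp ha with h|h
    · exact hdig a h
    · simp at h; omega
  · rw [ratVal_snoc, hn]
    have hq0 : (q:ℚ) ≠ 0 := by simp only [ne_eq, Nat.cast_eq_zero]; omega
    have key : p * n + (q - p * n % q) = q * (p * n / q + 1) := by
      have h1 := Nat.div_add_mod (p * n) q
      have h2 : q * (p * n / q + 1) = q * (p * n / q) + q := by ring
      omega
    have key' : ((p * n : ℕ) : ℚ) + ((q - p * n % q : ℕ) : ℚ)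
        = (q : ℚ) * ((p * n / q + 1 : ℕ) : ℚ) := by
      exact_mod_cast congrArg (Nat.cast : ℕ → ℚ) key
    field_simp
    push_cast at key' ⊢
    linarith
  · cases w with
    | nil =>
      have hn0 : n = 0 := by
        simp [ratVal] at hn
        exact_mod_cast hn.symm
      simp [hn0]
      omega
    | cons x t =>
      simpa using hhead

lemma inLang_of_snoc (p q : ℕ) (hq : 1 ≤ q) (hpq : q < p) (hco : Nat.Coprime p q)
    (u w : List ℕ) (b : ℕ) (hu : InLang p q u) (h : InLang p q (u ++ (w ++ [b]))) :
    InLang p q (u ++ w) := by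
  obtain ⟨hdig, ⟨m, hm⟩, hhead⟩ := h
  refine ⟨?_, ?_, ?_⟩
  · intro a ha
    apply hdig a
    simp at ha ⊢
    tauto
  · have hassoc : u ++ (w ++ [b]) = (u ++ w) ++ [b] := (List.append_assoc _ _ _).symm
    rw [hassoc, ratVal_snoc] at hm
    have hq0 : (q:ℚ) ≠ 0 := by simp only [ne_eq, Nat.cast_eq_zero]; omega
    have h1 : (p:ℚ) * ratVal p q (u ++ w) = ((m * q - b : ℤ) : ℚ) := by
      push_cast
      field_simp at hm
      linarith
    obtain ⟨z, h2⟩ := ratVal_den p q hq (u ++ w)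
    exact int_of_mul p q _ (by omega) hco _ _ _ h1 h2 (ratVal_nonneg p q _)
  · cases u with
    | cons x t => simpa using hu.2.2
    | nil =>
      cases w with
      | nil => simp
      | cons y s => simpa using hhead

/-- For coprime `p > q ≥ 1`, `u ∈ L_{p/q}`, and `l ∈ ℕ`: `wmin_{p/q}(u,l)` is a prefix of
`wmin_{p/q}(u,l+1)`, and `wmax_{p/q}(u,l)` is a prefix of `wmax_{p/q}(u,l+1)`. -/
theorem stmt3 (p q : ℕ) (hq : 1 ≤ q) (hpq : q < p) (hco : Nat.Coprime p q)
    (u : List ℕ) (hu : InLang p q u) (l : ℕ) :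
    (∀ v v' : List ℕ, IsWmin p q u l v → IsWmin p q u (l + 1) v' → v <+: v') ∧
    (∀ v v' : List ℕ, IsWmax p q u l v → IsWmax p q u (l + 1) v' → v <+: v') := by
  constructor
  · rintro v v' ⟨hlv, hv, hminv⟩ ⟨hlv', hv', hminv'⟩
    have hne : v' ≠ [] := by intro h; rw [h] at hlv'; simp at hlv'
    obtain ⟨w, b, rfl⟩ : ∃ w b, v' = w ++ [b] :=
      ⟨v'.dropLast, v'.getLast hne, (List.dropLast_append_getLast hne).symm⟩
    have hwl : w.length = l := by simpa using hlv'
    obtain ⟨a, ha, hext⟩ := exists_ext p q hq hpq (u ++ v) hv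
    have hcand1 : InLang p q (u ++ (v ++ [a])) := by
      rwa [← List.append_assoc]
    have h1 := hminv' (v ++ [a]) (by simp [hlv]) hcand1
    have hw : InLang p q (u ++ w) := inLang_of_snoc p q hq hpq hco u w b hu hv'
    have h2 := hminv w hwl hw
    rcases lex_trichotomy v w (by rw [hlv, hwl]) with heq|hlt|hgt
    · exact heq ▸ ⟨[b], rfl⟩
    · exact absurd (lex_append hlt (by rw [hlv, hwl]) [a] [b]) h1
    · exact absurd hgt h2
  · rintro v v' ⟨hlv, hv, hmaxv⟩ ⟨hlv', hv', hmaxv'⟩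
    have hne : v' ≠ [] := by intro h; rw [h] at hlv'; simp at hlv'
    obtain ⟨w, b, rfl⟩ : ∃ w b, v' = w ++ [b] :=
      ⟨v'.dropLast, v'.getLast hne, (List.dropLast_append_getLast hne).symm⟩
    have hwl : w.length = l := by simpa using hlv'
    obtain ⟨a, ha, hext⟩ := exists_ext p q hq hpq (u ++ v) hv
    have hcand1 : InLang p q (u ++ (v ++ [a])) := by
      rwa [← List.append_assoc]
    have h1 := hmaxv' (v ++ [a]) (by simp [hlv]) hcand1
    have hw : InLang p q (u ++ w) := inLang_of_snoc p q hq hpq hco u w b hu hv'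
    have h2 := hmaxv w hwl hw
    rcases lex_trichotomy v w (by rw [hlv, hwl]) with heq|hlt|hgt
    · exact heq ▸ ⟨[b], rfl⟩
    · exact absurd hlt h2
    · exact absurd (lex_append hgt (by rw [hlv, hwl]) [b] [a]) h1
end

section
/- Let p > q ≥ 1 be coprime integers. For every u ∈ L_{p/q} and every natural number l, wmax_{p/q}(u,l) = σ(wmin_{p/q}(succ(u),l)), where succ(u) is the unique word in L_{p/q} of valuation val_{p/q}(u)+1 and σ is the letterwise transformation replacing each letter i by i + p − q. -/
def cval (p q : ℕ) : List ℕ → ℕ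
  | [] => 0
  | a :: v => p ^ v.length * a + q * cval p q v

lemma fold_eq (p q : ℕ) (hq : q ≠ 0) : ∀ (v : List ℕ) (x : ℚ),
    List.foldl (fun x a => (p : ℚ) / q * x + a / q) x (v.map (fun a : ℕ => (a : ℚ)))
      = ((p : ℚ) ^ v.length * x + cval p q v) / q ^ v.length := by
  intro v
  induction v with
  | nil => intro x; simp [cval]
  | cons a v ih =>
      intro x
      have hq' : (q : ℚ) ≠ 0 := Nat.cast_ne_zero.mpr hq
      rw [List.map_cons, List.foldl_cons, ih]
      have hc : ((cval p q (a :: v) : ℚ)) = (p:ℚ) ^ v.length * a + q * cval p q v := by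
        simp only [cval]; push_cast; ring
      rw [List.length_cons, hc]
      field_simp
      ring

lemma ratVal_eq_fold (p q : ℕ) (w : List ℕ) :
    ratVal p q w
      = List.foldl (fun x a => (p : ℚ) / q * x + a / q) 0 (w.map (fun a : ℕ => (a : ℚ))) := by
  unfold ratVal
  congr 1
  induction w with
  | nil => rfl
  | cons a w ih => rw [show ((do let x ← a :: w; pure ((x:ℚ))) : List ℚ) = (a:ℚ) :: (do let x ← w; pure ((x:ℚ))) from rfl, ih]; rfl

lemma ratVal_append (p q : ℕ) (hq : q ≠ 0) (u v : List ℕ) :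
    ratVal p q (u ++ v)
      = ((p : ℚ) ^ v.length * ratVal p q u + cval p q v) / q ^ v.length := by
  rw [ratVal_eq_fold, ratVal_eq_fold, List.map_append, List.foldl_append, fold_eq p q hq]

lemma D_cons (p q : ℕ) (hq : 0 < q) (hco : Nat.Coprime p q) (a N : ℕ) (v : List ℕ) :
    q ^ (v.length + 1) ∣ p ^ (v.length + 1) * N + cval p q (a :: v)
      ↔ q ∣ p * N + a ∧
        q ^ v.length ∣ p ^ v.length * ((p * N + a) / q) + cval p q v := by
  have key : p ^ (v.length + 1) * N + cval p q (a :: v)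
      = p ^ v.length * (p * N + a) + q * cval p q v := by
    simp only [cval]; ring
  constructor
  · intro h
    rw [key] at h
    have h1 : q ∣ p ^ v.length * (p * N + a) + q * cval p q v :=
      dvd_trans (dvd_pow_self q (Nat.succ_ne_zero _)) h
    have h2 : q ∣ p ^ v.length * (p * N + a) :=
      (Nat.dvd_add_right (dvd_mul_right q (cval p q v))).mp (by rwa [Nat.add_comm] at h1)
    have h3 : q ∣ p * N + a := (Nat.Coprime.pow_right v.length hco.symm).dvd_of_dvd_mul_left h2
    refine ⟨h3, ?_⟩
    obtain ⟨M, hM⟩ := h3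
    have hMdiv : (p * N + a) / q = M := by rw [hM, Nat.mul_div_cancel_left _ hq]
    rw [hMdiv]
    have : q * (q ^ v.length) ∣ q * (p ^ v.length * M + cval p q v) := by
      rw [pow_succ, mul_comm (q ^ v.length) q] at h
      calc q * q ^ v.length ∣ p ^ v.length * (p * N + a) + q * cval p q v := h
        _ = q * (p ^ v.length * M + cval p q v) := by rw [hM]; ring
    exact (Nat.mul_dvd_mul_iff_left hq).mp this
  · rintro ⟨h3, h4⟩
    rw [key]
    obtain ⟨M, hM⟩ := h3
    have hMdiv : (p * N + a) / q = M := by rw [hM, Nat.mul_div_cancel_left _ hq]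
    rw [hMdiv] at h4
    rw [hM, pow_succ, mul_comm (q ^ v.length) q]
    calc q * q ^ v.length ∣ q * (p ^ v.length * M + cval p q v) :=
          Nat.mul_dvd_mul_left q h4
      _ = p ^ v.length * (q * M) + q * cval p q v := by ring

lemma mindigit_spec (q : ℕ) (hq : 0 < q) (m : ℕ) :
    (q - m % q) % q < q ∧ q ∣ m + (q - m % q) % q ∧
      ∀ b, q ∣ m + b → (q - m % q) % q ≤ b := by
  set a := (q - m % q) % q with ha
  have halt : a < q := Nat.mod_lt _ hq
  have hdvd : q ∣ m + a := by
    rcases Nat.eq_zero_or_pos (m % q) with h0 | h0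
    · have : a = 0 := by rw [ha, h0, Nat.sub_zero, Nat.mod_self]
      rw [this, Nat.add_zero]
      exact Nat.dvd_of_mod_eq_zero h0
    · have hlt : q - m % q < q := by omega
      have : a = q - m % q := by rw [ha, Nat.mod_eq_of_lt hlt]
      rw [this]
      obtain ⟨k, hk⟩ : ∃ k, m = q * k + m % q := ⟨m / q, (Nat.div_add_mod m q).symm⟩
      have hrq : m % q < q := Nat.mod_lt m hq
      have : m + (q - m % q) = q * k + q := by omega
      rw [this]
      exact ⟨k + 1, by ring⟩
  refine ⟨halt, hdvd, ?_⟩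
  intro b hb
  by_contra hba
  push_neg at hba
  have hd : q ∣ (m + a) - (m + b) := Nat.dvd_sub hdvd hb
  have : (m + a) - (m + b) = a - b := by omega
  rw [this] at hd
  have := Nat.le_of_dvd (by omega) hd
  omega

def minW (p q : ℕ) : ℕ → ℕ → List ℕ
  | _, 0 => []
  | N, l + 1 =>
      (q - p * N % q) % q :: minW p q ((p * N + (q - p * N % q) % q) / q) l

lemma minW_length (p q : ℕ) : ∀ (l N : ℕ), (minW p q N l).length = l := by
  intro l
  induction l with
  | zero => intro N; rfl
  | succ l ih => intro N; simp [minW, ih]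

lemma minW_lt (p q : ℕ) (hq : 0 < q) : ∀ (l N : ℕ), ∀ a ∈ minW p q N l, a < q := by
  intro l
  induction l with
  | zero => intro N a ha; simp [minW] at ha
  | succ l ih =>
      intro N a ha
      rw [minW] at ha
      rcases List.mem_cons.mp ha with h | h
      · rw [h]; exact Nat.mod_lt _ hq
      · exact ih _ a h

lemma minW_dvd (p q : ℕ) (hq : 0 < q) (hco : Nat.Coprime p q) :
    ∀ (l N : ℕ), q ^ l ∣ p ^ l * N + cval p q (minW p q N l) := by
  intro l
  induction l with
  | zero => intro N; simp
  | succ l ih =>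
      intro N
      rw [minW]
      have hlen : (minW p q ((p * N + (q - p * N % q) % q) / q) l).length = l :=
        minW_length p q l _
      rw [show l + 1 = (minW p q ((p * N + (q - p * N % q) % q) / q) l).length + 1 by rw [hlen]]
      rw [D_cons p q hq hco]
      rw [hlen]
      exact ⟨(mindigit_spec q hq (p * N)).2.1, ih _⟩

lemma minW_min (p q : ℕ) (hq : 0 < q) (hco : Nat.Coprime p q) :
    ∀ (l N : ℕ) (v' : List ℕ), v'.length = l →
      q ^ l ∣ p ^ l * N + cval p q v' →
      ¬ List.Lex (· < · : ℕ → ℕ → Prop) v' (minW p q N l) := by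
  intro l
  induction l with
  | zero =>
      intro N v' hlen _ hlex
      rw [List.length_eq_zero_iff] at hlen
      subst hlen
      rw [minW] at hlex
      cases hlex
  | succ l ih =>
      intro N v' hlen hdvd hlex
      obtain ⟨a', v'', rfl⟩ : ∃ a' v'', v' = a' :: v'' := by
        cases v' with
        | nil => simp at hlen
        | cons a' v'' => exact ⟨a', v'', rfl⟩
      have hlen' : v''.length = l := by simpa using hlen
      rw [show l + 1 = v''.length + 1 by rw [hlen']] at hdvd
      rw [D_cons p q hq hco] at hdvd
      obtain ⟨hd1, hd2⟩ := hdvd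
      rw [minW] at hlex
      obtain ⟨hq1, hq2, hq3⟩ := mindigit_spec q hq (p * N)
      cases hlex with
      | rel h => exact absurd h (Nat.not_lt.mpr (hq3 a' hd1))
      | cons h =>
          rw [hlen'] at hd2
          exact ih _ v'' hlen' hd2 h

lemma succ_step (p q N : ℕ) (hq : 0 < q) (hpq : q < p) :
    ∃ N', (p * (N + 1) + (q - p * (N + 1) % q) % q) / q = N' + 1 ∧
      p * N + ((q - p * (N + 1) % q) % q + (p - q)) = q * N' := by
  set b := (q - p * (N + 1) % q) % q with hb
  obtain ⟨hb1, hb2, _⟩ := mindigit_spec q hq (p * (N + 1))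
  set S := (p * (N + 1) + b) / q with hS
  have hqS : q * S = p * (N + 1) + b := Nat.mul_div_cancel' hb2
  have hpn : p * (N + 1) = p * N + p := by ring
  have hSpos : 1 ≤ S := by
    rcases Nat.eq_zero_or_pos S with h | h
    · exfalso
      rw [h, Nat.mul_zero] at hqS
      omega
    · exact h
  refine ⟨S - 1, by omega, ?_⟩
  have hqS' : q * (S - 1) + q = q * S := by
    have : q * S = q * (S - 1 + 1) := by rw [Nat.sub_add_cancel hSpos]
    rw [this]; ring
  omega

lemma maxW_dvd (p q : ℕ) (hq : 0 < q) (hpq : q < p) (hco : Nat.Coprime p q) :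
    ∀ (l N : ℕ),
      q ^ l ∣ p ^ l * N + cval p q ((minW p q (N + 1) l).map (fun i => i + (p - q))) := by
  intro l
  induction l with
  | zero => intro N; simp [minW]
  | succ l ih =>
      intro N
      obtain ⟨N', hN'1, hN'2⟩ := succ_step p q N hq hpq
      rw [minW, List.map_cons]
      set b := (q - p * (N + 1) % q) % q with hb
      set rest := (minW p q ((p * (N + 1) + b) / q) l).map (fun i => i + (p - q)) with hrest
      have hlen : rest.length = l := by
        rw [hrest, List.length_map, minW_length]
      rw [show l + 1 = rest.length + 1 by rw [hlen]]
      rw [D_cons p q hq hco, hlen]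
      constructor
      · exact ⟨N', hN'2⟩
      · have hdiv : (p * N + (b + (p - q))) / q = N' := by
          rw [hN'2, Nat.mul_div_cancel_left _ hq]
        rw [hdiv, hrest, hN'1]
        exact ih N'

lemma maxW_max (p q : ℕ) (hq : 0 < q) (hpq : q < p) (hco : Nat.Coprime p q) :
    ∀ (l N : ℕ) (v' : List ℕ), v'.length = l → (∀ a ∈ v', a < p) →
      q ^ l ∣ p ^ l * N + cval p q v' →
      ¬ List.Lex (· < · : ℕ → ℕ → Prop)
        ((minW p q (N + 1) l).map (fun i => i + (p - q))) v' := by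
  intro l
  induction l with
  | zero =>
      intro N v' hlen _ _ hlex
      rw [List.length_eq_zero_iff] at hlen
      subst hlen
      rw [minW] at hlex
      cases hlex
  | succ l ih =>
      intro N v' hlen hletters hdvd hlex
      obtain ⟨a', v'', rfl⟩ : ∃ a' v'', v' = a' :: v'' := by
        cases v' with
        | nil => simp at hlen
        | cons a' v'' => exact ⟨a', v'', rfl⟩
      have hlen' : v''.length = l := by simpa using hlen
      rw [show l + 1 = v''.length + 1 by rw [hlen']] at hdvd
      rw [D_cons p q hq hco] at hdvd
      obtain ⟨hd1, hd2⟩ := hdvd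
      obtain ⟨N', hN'1, hN'2⟩ := succ_step p q N hq hpq
      rw [minW, List.map_cons] at hlex
      set b := (q - p * (N + 1) % q) % q with hb
      have ha'p : a' < p := hletters a' List.mem_cons_self
      cases hlex with
      | rel h =>
          -- h : b + (p - q) < a'
          have hA : q ∣ p * N + (b + (p - q)) := ⟨N', hN'2⟩
          have hsub : q ∣ a' - (b + (p - q)) := by
            have := Nat.dvd_sub hd1 hA
            have heq : p * N + a' - (p * N + (b + (p - q))) = a' - (b + (p - q)) := by omega
            rwa [heq] at this
          have := Nat.le_of_dvd (by omega) hsub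
          omega
      | cons h =>
          -- heads equal : a' = b + (p - q)
          have hdiv : (p * N + (b + (p - q))) / q = N' := by
            rw [hN'2, Nat.mul_div_cancel_left _ hq]
          rw [hdiv, hlen'] at hd2
          rw [hN'1] at h
          exact ih N' v'' hlen' (fun a ha => hletters a (List.mem_cons_of_mem _ ha)) hd2 h

lemma lex_eq : ∀ (v w : List ℕ), v.length = w.length →
    ¬ List.Lex (· < · : ℕ → ℕ → Prop) v w → ¬ List.Lex (· < · : ℕ → ℕ → Prop) w v →
    v = w := by
  intro v
  induction v with
  | nil =>
      intro w hlen _ _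
      cases w with
      | nil => rfl
      | cons b w => simp at hlen
  | cons a v ih =>
      intro w hlen h1 h2
      cases w with
      | nil => simp at hlen
      | cons b w =>
          rcases Nat.lt_trichotomy a b with h | h | h
          · exact absurd (List.Lex.rel h) h1
          · subst h
            have := ih w (by simpa using hlen)
              (fun hl => h1 (List.Lex.cons hl)) (fun hl => h2 (List.Lex.cons hl))
            rw [this]
          · exact absurd (List.Lex.rel h) h2

lemma int_iff (p q : ℕ) (hq : 0 < q) (u v : List ℕ) (N : ℕ) (hN : ratVal p q u = N) :
    (∃ n : ℕ, ratVal p q (u ++ v) = n)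
      ↔ q ^ v.length ∣ p ^ v.length * N + cval p q v := by
  rw [ratVal_append p q hq.ne' u v, hN]
  have key : ((p : ℚ) ^ v.length * N + cval p q v)
      = ((p ^ v.length * N + cval p q v : ℕ) : ℚ) := by push_cast; ring
  have hqq : ((q : ℚ) ^ v.length) = ((q ^ v.length : ℕ) : ℚ) := by push_cast; ring
  rw [key, hqq]
  have hq0 : ((q ^ v.length : ℕ) : ℚ) ≠ 0 :=
    Nat.cast_ne_zero.mpr (pow_ne_zero _ hq.ne')
  constructor
  · rintro ⟨n, hn⟩
    rw [div_eq_iff hq0] at hn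
    have h : (p ^ v.length * N + cval p q v) = n * q ^ v.length := by exact_mod_cast hn
    exact ⟨n, by rw [h, Nat.mul_comm]⟩
  · rintro ⟨k, hk⟩
    refine ⟨k, ?_⟩
    rw [hk]
    push_cast
    rw [mul_comm]
    field_simp


/-- For coprime `p > q ≥ 1`, `u ∈ L_{p/q}`, and `l ∈ ℕ`:
`wmax_{p/q}(u,l) = σ(wmin_{p/q}(succ(u),l))`, where `succ(u)` is the unique word `s ∈ L_{p/q}`
with `val_{p/q}(s) = val_{p/q}(u) + 1` and `σ` replaces each letter `i` by `i + p - q`. -/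
theorem stmt7 (p q : ℕ) (hq : 1 ≤ q) (hpq : q < p) (hco : Nat.Coprime p q)
    (u : List ℕ) (hu : InLang p q u) (l : ℕ)
    (s : List ℕ) (hs : InLang p q s) (hsval : ratVal p q s = ratVal p q u + 1)
    (v : List ℕ) (hv : IsWmin p q s l v)
    (w : List ℕ) (hw : IsWmax p q u l w) :
    w = v.map (fun i => i + (p - q)) := by
  have hq0 : 0 < q := hq
  obtain ⟨hult, ⟨N, hNval⟩, huh⟩ := hu
  obtain ⟨hslt, ⟨Ns, hNsval⟩, hsh⟩ := hs
  have hNs : Ns = N + 1 := by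
    have h : (Ns : ℚ) = (N : ℚ) + 1 := by rw [← hNsval, hsval, hNval]
    exact_mod_cast h
  subst hNs
  set m := minW p q (N + 1) l with hm
  have hmlen : m.length = l := minW_length p q l _
  have hminlang : InLang p q (s ++ m) := by
    refine ⟨?_, ?_, ?_⟩
    · intro a ha
      rcases List.mem_append.mp ha with h | h
      · exact hslt a h
      · exact lt_trans (minW_lt p q hq0 l _ a h) hpq
    · rw [int_iff p q hq0 s m (N + 1) hNsval, hmlen]
      exact minW_dvd p q hq0 hco l (N + 1)
    · have hsne : s ≠ [] := by
        intro h
        subst h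
        have h0 : ratVal p q [] = 0 := rfl
        rw [hNsval] at h0
        exact_mod_cast h0
      cases s with
      | nil => exact absurd rfl hsne
      | cons c s' => simpa using hsh
  have hvm : v = m := by
    obtain ⟨hvlen, hvlang, hvmin⟩ := hv
    refine lex_eq v m (by rw [hvlen, hmlen]) ?_ ?_
    · have hdv : q ^ v.length ∣ p ^ v.length * (N + 1) + cval p q v :=
        (int_iff p q hq0 s v (N + 1) hNsval).mp hvlang.2.1
      rw [hvlen] at hdv
      exact minW_min p q hq0 hco l (N + 1) v hvlen hdv
    · exact hvmin m hmlen hminlang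
  set t := m.map (fun i => i + (p - q)) with ht
  have htlen : t.length = l := by rw [ht, List.length_map, hmlen]
  have htlang : InLang p q (u ++ t) := by
    refine ⟨?_, ?_, ?_⟩
    · intro a ha
      rcases List.mem_append.mp ha with h | h
      · exact hult a h
      · rw [ht] at h
        obtain ⟨i, hi, rfl⟩ := List.mem_map.mp h
        have := minW_lt p q hq0 l _ i hi
        omega
    · rw [int_iff p q hq0 u t N hNval, htlen]
      exact maxW_dvd p q hq0 hpq hco l N
    · cases u with
      | nil =>
          simp only [List.nil_append]
          rw [ht]
          cases m with
          | nil => simp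
          | cons i m' =>
              simp only [List.map_cons, List.head?_cons, ne_eq, Option.some.injEq]
              omega
      | cons c u' => simpa using huh
  have hwt : w = t := by
    obtain ⟨hwlen, hwlang, hwmax⟩ := hw
    refine lex_eq w t (by rw [hwlen, htlen]) (hwmax t htlen htlang) ?_
    intro hlex
    have hdw : q ^ w.length ∣ p ^ w.length * N + cval p q w :=
      (int_iff p q hq0 u w N hNval).mp hwlang.2.1
    rw [hwlen] at hdw
    have hwlt : ∀ a ∈ w, a < p := fun a ha =>
      hwlang.1 a (List.mem_append.mpr (Or.inr ha))
    exact maxW_max p q hq0 hpq hco l N w hwlen hwlt hdw (by rw [ht] at hlex; exact hlex)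
  rw [hwt, ht, hvm]
end

section
/- Let p > q ≥ 1 be integers. Let u and u′ be digit words over {0,…,p−1} with val_{p/q}(u′) = val_{p/q}(u) + 1, and let v be a word of length l all of whose letters lie in {0,…,q−1}. Then val_{p/q}(u·σ(v)) = val_{p/q}(u′·v) − 1, where σ(v) is obtained from v by adding p − q to each letter. -/
lemma foldl_shift (p q : ℕ) (hq : 1 ≤ q) (hpq : q < p) (v : List ℕ) :
    ∀ x : ℚ,
      v.foldl (fun (x : ℚ) (a : ℕ) => (p : ℚ) / q * x + ((a + (p - q) : ℕ) : ℚ) / q) x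
      = v.foldl (fun (x : ℚ) (a : ℕ) => (p : ℚ) / q * x + (a : ℚ) / q) (x + 1) - 1 := by
  induction v with
  | nil => intro x; simp
  | cons a v ih =>
    intro x
    simp only [List.foldl_cons]
    rw [ih]
    congr 2
    have hq0 : (q : ℚ) ≠ 0 := by positivity
    push_cast [Nat.cast_sub hpq.le]
    field_simp
    ring

/-- For integers `p > q ≥ 1`, digit words `u, u'` over `{0,…,p-1}` with
`val_{p/q}(u') = val_{p/q}(u) + 1`, and a word `v` of length `l` with letters in `{0,…,q-1}`:
`val_{p/q}(u·σ(v)) = val_{p/q}(u'·v) - 1`, where `σ` adds `p - q` to each letter. -/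
theorem stmt8 (p q : ℕ) (hq : 1 ≤ q) (hpq : q < p)
    (u u' : List ℕ) (hu : ∀ a ∈ u, a < p) (hu' : ∀ a ∈ u', a < p)
    (hval : ratVal p q u' = ratVal p q u + 1)
    (l : ℕ) (v : List ℕ) (hvl : v.length = l) (hv : ∀ a ∈ v, a < q) :
    ratVal p q (u ++ v.map (fun i => i + (p - q))) = ratVal p q (u' ++ v) - 1 := by
  unfold ratVal at *
  simp only [bind_pure_comp, Functor.map, List.map_append, List.foldl_append, List.foldl_map] at hval ⊢
  rw [foldl_shift p q hq hpq, hval]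
end

section
/- Let p > q ≥ 1 be coprime integers. Then every infinite word wmax_{p/q}(u) with u ∈ L_{p/q} is normal over the alphabet {p−q,…,p−1} if and only if every infinite word wmin_{p/q}(u) with u ∈ L_{p/q} nonempty is normal over the alphabet {0,…,q−1}. -/
/-- `w : ℕ → ℕ` is the infinite minimal word with seed `u`: its prefix of length `l`
is `wmin_{p/q}(u,l)` for every `l`. -/
def IsWminInf (p q : ℕ) (u : List ℕ) (w : ℕ → ℕ) : Prop :=
  ∀ l : ℕ, IsWmin p q u l ((List.range l).map w)

/-- `w : ℕ → ℕ` is the infinite maximal word with seed `u`: its prefix of length `l`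
is `wmax_{p/q}(u,l)` for every `l`. -/
def IsWmaxInf (p q : ℕ) (u : List ℕ) (w : ℕ → ℕ) : Prop :=
  ∀ l : ℕ, IsWmax p q u l ((List.range l).map w)

/-- The infinite word `w` is normal over the finite alphabet `A`: all its letters lie in `A`,
and every finite word `v` of length `l ≥ 1` over `A` occurs in `w` with limit frequency
`1 / |A|^l`. -/
def NormalOver (w : ℕ → ℕ) (A : Finset ℕ) : Prop :=
  (∀ n, w n ∈ A) ∧
  ∀ l : ℕ, 1 ≤ l → ∀ v : List ℕ, v.length = l → (∀ a ∈ v, a ∈ A) →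
    Filter.Tendsto
      (fun N => (((Finset.range N).filter
          (fun m => (List.range l).map (fun i => w (m + i)) = v)).card : ℝ) / N)
      Filter.atTop (nhds (1 / (A.card : ℝ) ^ l))

namespace Stmt9Aux


/-- the least digit `a < q` with `q ∣ p*n + a` -/
def aMin (p q n : ℕ) : ℕ := (q - p * n % q) % q

def TMin (p q n : ℕ) : ℕ := (p * n + aMin p q n) / q

def aMax (p q n : ℕ) : ℕ := aMin p q (n + 1) + (p - q)

def TMax (p q n : ℕ) : ℕ := TMin p q (n + 1) - 1

lemma aMin_lt {q : ℕ} (hq : 0 < q) (p n : ℕ) : aMin p q n < q := Nat.mod_lt _ hq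

lemma dvd_aMin {q : ℕ} (hq : 0 < q) (p n : ℕ) : q ∣ p * n + aMin p q n := by
  have h1 : q * (p * n / q) + p * n % q = p * n := Nat.div_add_mod _ _
  have hr : p * n % q < q := Nat.mod_lt _ hq
  unfold aMin
  rcases Nat.eq_zero_or_pos (p * n % q) with h | h
  · refine ⟨p * n / q, ?_⟩; rw [h]; simp; omega
  · have : (q - p * n % q) % q = q - p * n % q := Nat.mod_eq_of_lt (by omega)
    rw [this]
    refine ⟨p * n / q + 1, ?_⟩
    have h2 : q * (p * n / q + 1) = q * (p * n / q) + q := by ring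
    omega

lemma TMin_spec {q : ℕ} (hq : 0 < q) (p n : ℕ) :
    q * TMin p q n = p * n + aMin p q n :=
  Nat.mul_div_cancel' (dvd_aMin hq p n)

lemma TMin_pos {p q : ℕ} (hq : 0 < q) (hpq : q < p) {n : ℕ} (hn : 0 < n) :
    0 < TMin p q n := by
  have h := TMin_spec hq p n
  rcases Nat.eq_zero_or_pos (TMin p q n) with h0 | h0
  · exfalso
    rw [h0, Nat.mul_zero] at h
    have : 0 < p * n := Nat.mul_pos (by omega) hn
    omega
  · exact h0

lemma TMax_spec {p q : ℕ} (hq : 0 < q) (hpq : q < p) (n : ℕ) :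
    q * TMax p q n = p * n + aMax p q n := by
  have h := TMin_spec hq p (n + 1)
  have h1 : 0 < TMin p q (n + 1) := TMin_pos hq hpq (Nat.succ_pos n)
  unfold TMax aMax
  obtain ⟨T, hT⟩ : ∃ T, TMin p q (n + 1) = T + 1 := ⟨TMin p q (n+1) - 1, by omega⟩
  rw [hT] at h ⊢
  simp only [Nat.add_sub_cancel]
  have hpn : p * (n + 1) = p * n + p := by ring
  rw [hpn] at h
  have : q * (T + 1) = q * T + q := by ring
  omega

lemma iterate_TMin_pos {p q : ℕ} (hq : 0 < q) (hpq : q < p) {n : ℕ} (hn : 0 < n) :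
    ∀ i, 0 < (TMin p q)^[i] n := by
  intro i
  induction i generalizing n with
  | zero => simpa
  | succ i IH =>
    rw [Function.iterate_succ_apply]
    exact IH (TMin_pos hq hpq hn)

lemma iterate_TMax_add_one {p q : ℕ} (hq : 0 < q) (hpq : q < p) (n : ℕ) :
    ∀ i, (TMax p q)^[i] n + 1 = (TMin p q)^[i] (n + 1) := by
  intro i
  induction i generalizing n with
  | zero => simp
  | succ i IH =>
    rw [Function.iterate_succ_apply, Function.iterate_succ_apply]
    have h2 : TMax p q n + 1 = TMin p q (n + 1) := by
      unfold TMax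
      have h1 : 0 < TMin p q (n + 1) := TMin_pos hq hpq (Nat.succ_pos n)
      omega
    rw [IH (TMax p q n), h2]


/-- numerator: for `w` of length `l`, `Nnum w = q^l * ratVal w` -/
def Nnum (p q : ℕ) : List ℕ → ℕ
  | [] => 0
  | a :: t => a * p ^ t.length + q * Nnum p q t

/-- the canonical minimal completion word of length `l` for seed `n` -/
def Vm (p q : ℕ) : ℕ → ℕ → List ℕ
  | _, 0 => []
  | n, l + 1 => aMin p q n :: Vm p q (TMin p q n) l

/-- the canonical maximal completion word of length `l` for seed `n` -/
def Vmax (p q : ℕ) : ℕ → ℕ → List ℕ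
  | _, 0 => []
  | n, l + 1 => aMax p q n :: Vmax p q (TMax p q n) l

lemma Vm_length (p q : ℕ) : ∀ (l n : ℕ), (Vm p q n l).length = l := by
  intro l
  induction l with
  | zero => intro n; rfl
  | succ l IH => intro n; simp [Vm, IH]

lemma Vmax_length (p q : ℕ) : ∀ (l n : ℕ), (Vmax p q n l).length = l := by
  intro l
  induction l with
  | zero => intro n; rfl
  | succ l IH => intro n; simp [Vmax, IH]

lemma Vm_mem {q : ℕ} (hq : 0 < q) (p : ℕ) :
    ∀ (l n : ℕ), ∀ a ∈ Vm p q n l, a < q := by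
  intro l
  induction l with
  | zero => intro n a ha; simp [Vm] at ha
  | succ l IH =>
    intro n a ha
    simp only [Vm, List.mem_cons] at ha
    rcases ha with rfl | ha
    · exact aMin_lt hq p n
    · exact IH _ a ha

lemma Vmax_mem {p q : ℕ} (hq : 0 < q) (hpq : q < p) :
    ∀ (l n : ℕ), ∀ a ∈ Vmax p q n l, p - q ≤ a ∧ a < p := by
  intro l
  induction l with
  | zero => intro n a ha; simp [Vmax] at ha
  | succ l IH =>
    intro n a ha
    simp only [Vmax, List.mem_cons] at ha
    rcases ha with rfl | ha
    · have := aMin_lt hq p (n + 1)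
      unfold aMax
      omega
    · exact IH _ a ha

lemma Vm_spec {p q : ℕ} (hq : 0 < q) :
    ∀ (l n : ℕ), p ^ l * n + Nnum p q (Vm p q n l) = q ^ l * (TMin p q)^[l] n := by
  intro l
  induction l with
  | zero => intro n; simp [Vm, Nnum]
  | succ l IH =>
    intro n
    have h1 : p * n + aMin p q n = q * TMin p q n := (TMin_spec hq p n).symm
    calc p ^ (l + 1) * n + Nnum p q (Vm p q n (l + 1))
        = p ^ l * (p * n + aMin p q n) + q * Nnum p q (Vm p q (TMin p q n) l) := by
          simp only [Vm, Nnum, Vm_length]; ring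
      _ = q * (p ^ l * TMin p q n + Nnum p q (Vm p q (TMin p q n) l)) := by rw [h1]; ring
      _ = q * (q ^ l * (TMin p q)^[l] (TMin p q n)) := by rw [IH]
      _ = q ^ (l + 1) * (TMin p q)^[l + 1] n := by
          rw [Function.iterate_succ_apply]; ring

lemma Vmax_spec {p q : ℕ} (hq : 0 < q) (hpq : q < p) :
    ∀ (l n : ℕ), p ^ l * n + Nnum p q (Vmax p q n l) + q ^ l
      = q ^ l * ((TMax p q)^[l] n + 1) := by
  intro l
  induction l with
  | zero => intro n; simp [Vmax, Nnum]
  | succ l IH =>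
    intro n
    have h1 : p * n + aMax p q n = q * TMax p q n := (TMax_spec hq hpq n).symm
    calc p ^ (l + 1) * n + Nnum p q (Vmax p q n (l + 1)) + q ^ (l + 1)
        = p ^ l * (p * n + aMax p q n)
            + q * (Nnum p q (Vmax p q (TMax p q n) l) + q ^ l) := by
          simp only [Vmax, Nnum, Vmax_length]; ring
      _ = q * (p ^ l * TMax p q n + Nnum p q (Vmax p q (TMax p q n) l) + q ^ l) := by
          rw [h1]; ring
      _ = q * (q ^ l * ((TMax p q)^[l] (TMax p q n) + 1)) := by rw [IH]
      _ = q ^ (l + 1) * ((TMax p q)^[l + 1] n + 1) := by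
          rw [Function.iterate_succ_apply]; ring

lemma Vm_dvd {p q : ℕ} (hq : 0 < q) (l n : ℕ) :
    q ^ l ∣ p ^ l * n + Nnum p q (Vm p q n l) :=
  ⟨(TMin p q)^[l] n, Vm_spec hq l n⟩

lemma Vmax_dvd {p q : ℕ} (hq : 0 < q) (hpq : q < p) (l n : ℕ) :
    q ^ l ∣ p ^ l * n + Nnum p q (Vmax p q n l) := by
  have h := Vmax_spec hq hpq l n
  rw [Nat.mul_succ] at h
  exact ⟨(TMax p q)^[l] n, by omega⟩

lemma lex_antisymm : ∀ {v₁ v₂ : List ℕ}, v₁.length = v₂.length →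
    ¬ List.Lex (· < · : ℕ → ℕ → Prop) v₁ v₂ →
    ¬ List.Lex (· < · : ℕ → ℕ → Prop) v₂ v₁ → v₁ = v₂ := by
  intro v₁
  induction v₁ with
  | nil => intro v₂ h _ _; cases v₂ with
    | nil => rfl
    | cons b t => simp at h
  | cons a t IH =>
    intro v₂ hlen h1 h2
    cases v₂ with
    | nil => simp at hlen
    | cons b s =>
      rcases lt_trichotomy a b with h | h | h
      · exact absurd (List.Lex.rel h) h1
      · subst h
        have ht : t = s := by
          apply IH (by simpa using hlen)
          · exact fun hl => h1 (List.Lex.cons hl)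
          · exact fun hl => h2 (List.Lex.cons hl)
        rw [ht]
      · exact absurd (List.Lex.rel h) h2

lemma Vm_min {p q : ℕ} (hq : 0 < q) (hco : Nat.Coprime p q) :
    ∀ (l n : ℕ) (v : List ℕ), v.length = l →
      q ^ l ∣ p ^ l * n + Nnum p q v →
      ¬ List.Lex (· < · : ℕ → ℕ → Prop) v (Vm p q n l) := by
  intro l
  induction l with
  | zero =>
    intro n v _ _
    simp only [Vm]
    exact List.not_lex_nil
  | succ l IH =>
    intro n v hlen hdvd
    cases v with
    | nil => simp at hlen
    | cons b t =>
      have hlt : t.length = l := by simpa using hlen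
      intro hlex
      have hqd : q ∣ p ^ (l + 1) * n + Nnum p q (b :: t) :=
        dvd_trans (dvd_pow_self q (Nat.succ_ne_zero l)) hdvd
      have heq : p ^ (l + 1) * n + Nnum p q (b :: t)
          = q * Nnum p q t + p ^ l * (p * n + b) := by
        simp only [Nnum, hlt]; ring
      rw [heq] at hqd
      have h2 : q ∣ p ^ l * (p * n + b) := (Nat.dvd_add_right ⟨Nnum p q t, rfl⟩).mp hqd
      have h3 : q ∣ p * n + b := by
        have hcop : Nat.Coprime q (p ^ l) := (Nat.Coprime.pow_left l hco).symm
        exact hcop.dvd_of_dvd_mul_left h2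
      have h4 : q ∣ p * n + aMin p q n := dvd_aMin hq p n
      have haq : aMin p q n < q := aMin_lt hq p n
      have hb : aMin p q n ≤ b := by
        by_contra hc
        push_neg at hc
        have h5 : q ∣ aMin p q n - b := by
          have h6 := Nat.dvd_sub h4 h3
          have h7 : p * n + aMin p q n - (p * n + b) = aMin p q n - b := by omega
          rwa [h7] at h6
        have := Nat.le_of_dvd (by omega) h5
        omega
      cases hlex with
      | rel h => omega
      | cons h =>
        -- here b = aMin p q n, h : Lex t (Vm (TMin n) l)
        have hdvd' : q ^ l ∣ p ^ l * TMin p q n + Nnum p q t := by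
          have heq2 : p ^ (l + 1) * n + Nnum p q (aMin p q n :: t)
              = q * (p ^ l * TMin p q n + Nnum p q t) := by
            have h5 : p * n + aMin p q n = q * TMin p q n := (TMin_spec hq p n).symm
            calc p ^ (l + 1) * n + Nnum p q (aMin p q n :: t)
                = p ^ l * (p * n + aMin p q n) + q * Nnum p q t := by
                  simp only [Nnum, hlt]; ring
              _ = q * (p ^ l * TMin p q n + Nnum p q t) := by rw [h5]; ring
          rw [heq2, pow_succ, Nat.mul_comm (q ^ l) q] at hdvd
          exact (mul_dvd_mul_iff_left (by omega : q ≠ 0)).mp hdvd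
        exact IH (TMin p q n) t hlt hdvd' h

lemma Vmax_max {p q : ℕ} (hq : 0 < q) (hpq : q < p) (hco : Nat.Coprime p q) :
    ∀ (l n : ℕ) (v : List ℕ), v.length = l → (∀ a ∈ v, a < p) →
      q ^ l ∣ p ^ l * n + Nnum p q v →
      ¬ List.Lex (· < · : ℕ → ℕ → Prop) (Vmax p q n l) v := by
  intro l
  induction l with
  | zero =>
    intro n v hlen _ _
    have : v = [] := List.length_eq_zero_iff.mp hlen
    subst this
    exact List.not_lex_nil
  | succ l IH =>
    intro n v hlen hvp hdvd
    cases v with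
    | nil => simp at hlen
    | cons b t =>
      have hlt : t.length = l := by simpa using hlen
      intro hlex
      have hqd : q ∣ p ^ (l + 1) * n + Nnum p q (b :: t) :=
        dvd_trans (dvd_pow_self q (Nat.succ_ne_zero l)) hdvd
      have heq : p ^ (l + 1) * n + Nnum p q (b :: t)
          = q * Nnum p q t + p ^ l * (p * n + b) := by
        simp only [Nnum, hlt]; ring
      rw [heq] at hqd
      have h2 : q ∣ p ^ l * (p * n + b) := (Nat.dvd_add_right ⟨Nnum p q t, rfl⟩).mp hqd
      have h3 : q ∣ p * n + b := by
        have hcop : Nat.Coprime q (p ^ l) := (Nat.Coprime.pow_left l hco).symm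
        exact hcop.dvd_of_dvd_mul_left h2
      have h4 : q ∣ p * n + aMax p q n := ⟨TMax p q n, by
        have := TMax_spec hq hpq n; omega⟩
      have haq : aMax p q n < p ∧ p - q ≤ aMax p q n := by
        have := aMin_lt hq p (n + 1)
        unfold aMax
        omega
      have hbp : b < p := hvp b List.mem_cons_self
      have hb : b ≤ aMax p q n := by
        by_contra hc
        push_neg at hc
        have h5 : q ∣ b - aMax p q n := by
          have h6 := Nat.dvd_sub h3 h4
          have h7 : p * n + b - (p * n + aMax p q n) = b - aMax p q n := by omega
          rwa [h7] at h6
        have := Nat.le_of_dvd (by omega) h5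
        omega
      -- hlex : Lex (aMax n :: Vmax (TMax n) l) (b :: t)
      cases hlex with
      | rel h =>
        omega
      | cons h =>
        have hdvd' : q ^ l ∣ p ^ l * TMax p q n + Nnum p q t := by
          have heq2 : p ^ (l + 1) * n + Nnum p q (aMax p q n :: t)
              = q * (p ^ l * TMax p q n + Nnum p q t) := by
            have h5 : p * n + aMax p q n = q * TMax p q n := (TMax_spec hq hpq n).symm
            calc p ^ (l + 1) * n + Nnum p q (aMax p q n :: t)
                = p ^ l * (p * n + aMax p q n) + q * Nnum p q t := by
                  simp only [Nnum, hlt]; ring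
              _ = q * (p ^ l * TMax p q n + Nnum p q t) := by rw [h5]; ring
          rw [heq2, pow_succ, Nat.mul_comm (q ^ l) q] at hdvd
          exact (mul_dvd_mul_iff_left (by omega : q ≠ 0)).mp hdvd
        exact IH (TMax p q n) t hlt (fun a ha => hvp a (List.mem_cons_of_mem _ ha)) hdvd' h

section RatVal

variable (p q : ℕ)

/-- abbreviation for the folding function of `ratVal` -/
def rf (x a : ℚ) : ℚ := (p : ℚ) / q * x + a / q

lemma ratVal_eq (w : List ℕ) :
    ratVal p q w = (w.map (fun a : ℕ => (a : ℚ))).foldl (rf p q) 0 := by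
  show ratVal p q w = (w.map (fun a : ℕ => (a : ℚ))).foldl
    (fun x a => (p : ℚ) / q * x + a / q) 0
  rw [ratVal]
  rw [show (do let a ← w; pure ((a : ℚ))) = w.flatMap (pure ∘ fun a : ℕ => (a : ℚ)) from rfl,
    List.flatMap_pure_eq_map]

lemma foldl_aux : ∀ (s : List ℚ) (x : ℚ),
    s.foldl (rf p q) x = ((p : ℚ) / q) ^ s.length * x + s.foldl (rf p q) 0 := by
  intro s
  induction s with
  | nil => intro x; simp
  | cons b t IH =>
    intro x
    simp only [List.foldl_cons, List.length_cons]
    rw [IH (rf p q x b), IH (rf p q 0 b)]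
    unfold rf
    ring

lemma ratVal_cons (a : ℕ) (t : List ℕ) :
    ratVal p q (a :: t) = ((p : ℚ) / q) ^ t.length * ((a : ℚ) / q) + ratVal p q t := by
  rw [ratVal_eq, ratVal_eq, List.map_cons, List.foldl_cons, foldl_aux]
  simp only [List.length_map]
  unfold rf
  ring

lemma ratVal_nil' : ratVal p q [] = 0 := by
  have := ratVal_eq p q []
  simpa using this

lemma ratVal_singleton (a : ℕ) : ratVal p q [a] = (a : ℚ) / q := by
  rw [ratVal_cons p q a []]
  rw [ratVal_nil']
  simp

lemma ratVal_append (u v : List ℕ) :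
    ratVal p q (u ++ v) = ((p : ℚ) / q) ^ v.length * ratVal p q u + ratVal p q v := by
  rw [ratVal_eq, ratVal_eq, ratVal_eq, List.map_append, List.foldl_append, foldl_aux]
  simp only [List.length_map]

lemma ratVal_mul_pow (hq : 0 < q) (w : List ℕ) :
    ratVal p q w * (q : ℚ) ^ w.length = (Nnum p q w : ℚ) := by
  have hq0 : (q : ℚ) ≠ 0 := by positivity
  induction w with
  | nil => simp [ratVal, Nnum]
  | cons a t IH =>
    rw [ratVal_cons]
    simp only [Nnum, List.length_cons]
    push_cast
    rw [div_pow]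
    have hqp : ((q : ℚ)) ^ t.length ≠ 0 := by positivity
    field_simp
    ring_nf
    ring_nf at IH
    rw [← IH]
    ring

lemma ratVal_nonneg (w : List ℕ) : 0 ≤ ratVal p q w := by
  have key : ∀ (s : List ℚ) (x : ℚ), (∀ a ∈ s, 0 ≤ a) → 0 ≤ x →
      0 ≤ s.foldl (rf p q) x := by
    intro s
    induction s with
    | nil => intro x _ hx; simpa
    | cons b t IH =>
      intro x hs hx
      simp only [List.foldl_cons]
      apply IH _ (fun a ha => hs a (List.mem_cons_of_mem _ ha))
      have hb : 0 ≤ b := hs b List.mem_cons_self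
      have h1 : 0 ≤ (p : ℚ) / q := by positivity
      have h2 : 0 ≤ b / q := by positivity
      unfold rf
      nlinarith
  rw [ratVal_eq]
  apply key _ _ _ le_rfl
  intro a ha
  simp only [List.mem_map] at ha
  obtain ⟨b, _, rfl⟩ := ha
  positivity

lemma ratVal_pos (hp : 0 < p) (hq : 0 < q) {w : List ℕ}
    (hw : w.head? ≠ some 0) (hne : w ≠ []) : 0 < ratVal p q w := by
  cases w with
  | nil => exact absurd rfl hne
  | cons a t =>
    have ha : a ≠ 0 := by
      intro h; apply hw; rw [h]; rfl
    rw [ratVal_cons]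
    have h1 : 0 < ((p : ℚ) / q) ^ t.length := by positivity
    have h2 : 0 < (a : ℚ) / q := by
      have : 0 < (a : ℚ) := by exact_mod_cast Nat.pos_of_ne_zero ha
      positivity
    have h3 := ratVal_nonneg p q t
    nlinarith

end RatVal

lemma mem_int_iff {p q : ℕ} (hq : 0 < q) (u v : List ℕ) (n : ℕ)
    (hn : ratVal p q u = (n : ℚ)) :
    (∃ N : ℕ, ratVal p q (u ++ v) = (N : ℚ)) ↔
      q ^ v.length ∣ p ^ v.length * n + Nnum p q v := by
  have hq0 : (q : ℚ) ≠ 0 := by positivity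
  have hqp : ((q : ℚ)) ^ v.length ≠ 0 := by positivity
  have happ : ratVal p q (u ++ v) = ((p : ℚ) / q) ^ v.length * n + ratVal p q v := by
    rw [ratVal_append, hn]
  have hkey : ratVal p q (u ++ v) * (q : ℚ) ^ v.length
      = (p : ℚ) ^ v.length * n + (Nnum p q v : ℚ) := by
    rw [happ, add_mul, ← ratVal_mul_pow p q hq v, div_pow]
    field_simp
  constructor
  · rintro ⟨N, hN⟩
    refine ⟨N, ?_⟩
    have hc : ((p ^ v.length * n + Nnum p q v : ℕ) : ℚ) = ((q ^ v.length * N : ℕ) : ℚ) := by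
      push_cast
      rw [← hkey, hN]
      ring
    exact_mod_cast hc
  · rintro ⟨N, hN⟩
    refine ⟨N, ?_⟩
    have hQ : (p : ℚ) ^ v.length * n + (Nnum p q v : ℚ) = (q : ℚ) ^ v.length * N := by
      exact_mod_cast hN
    have h2 : ratVal p q (u ++ v) * (q : ℚ) ^ v.length = (N : ℚ) * (q : ℚ) ^ v.length := by
      rw [hkey, hQ]; ring
    exact mul_right_cancel₀ hqp h2

lemma head?_append_left {u v : List ℕ} (hne : u ≠ []) : (u ++ v).head? = u.head? := by
  cases u with
  | nil => exact absurd rfl hne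
  | cons a t => rfl

lemma inLang_append {p q : ℕ} (hq : 0 < q) {u : List ℕ} {n : ℕ}
    (hu : InLang p q u) (hn : ratVal p q u = (n : ℚ)) (v : List ℕ)
    (hvd : ∀ a ∈ v, a < p)
    (hdvd : q ^ v.length ∣ p ^ v.length * n + Nnum p q v)
    (hhead : u = [] → v.head? ≠ some 0) :
    InLang p q (u ++ v) := by
  refine ⟨?_, (mem_int_iff hq u v n hn).2 hdvd, ?_⟩
  · intro a ha
    rcases List.mem_append.mp ha with h | h
    · exact hu.1 a h
    · exact hvd a h
  · by_cases hne : u = []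
    · subst hne
      simpa using hhead rfl
    · rw [head?_append_left hne]
      exact hu.2.2

lemma isWmin_Vm {p q : ℕ} (hq : 0 < q) (hpq : q < p) (hco : Nat.Coprime p q)
    {u : List ℕ} {n : ℕ} (hu : InLang p q u) (hne : u ≠ [])
    (hn : ratVal p q u = (n : ℚ)) (l : ℕ) :
    IsWmin p q u l (Vm p q n l) := by
  refine ⟨Vm_length p q l n, ?_, ?_⟩
  · refine inLang_append hq hu hn _ (fun a ha => lt_trans (Vm_mem hq p l n a ha) hpq) ?_
      (fun h => absurd h hne)
    rw [Vm_length]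
    exact Vm_dvd hq l n
  · intro v' hlen' hIn'
    obtain ⟨N, hN⟩ := hIn'.2.1
    have hdvd := (mem_int_iff hq u v' n hn).1 ⟨N, hN⟩
    rw [hlen'] at hdvd
    exact Vm_min hq hco l n v' hlen' hdvd

lemma isWmax_Vmax {p q : ℕ} (hq : 0 < q) (hpq : q < p) (hco : Nat.Coprime p q)
    {u : List ℕ} {n : ℕ} (hu : InLang p q u)
    (hn : ratVal p q u = (n : ℚ)) (l : ℕ) :
    IsWmax p q u l (Vmax p q n l) := by
  refine ⟨Vmax_length p q l n, ?_, ?_⟩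
  · refine inLang_append hq hu hn _ (fun a ha => (Vmax_mem hq hpq l n a ha).2) ?_ ?_
    · rw [Vmax_length]
      exact Vmax_dvd hq hpq l n
    · intro _
      cases l with
      | zero => simp [Vmax]
      | succ l =>
        simp only [Vmax, List.head?_cons, ne_eq, Option.some.injEq]
        have := aMin_lt hq p (n + 1)
        unfold aMax
        omega
  · intro v' hlen' hIn'
    obtain ⟨N, hN⟩ := hIn'.2.1
    have hdvd := (mem_int_iff hq u v' n hn).1 ⟨N, hN⟩
    rw [hlen'] at hdvd
    have hvp : ∀ a ∈ v', a < p := fun a ha => hIn'.1 a (List.mem_append_right u ha)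
    exact Vmax_max hq hpq hco l n v' hlen' hvp hdvd

lemma isWmin_unique {p q : ℕ} {u : List ℕ} {l : ℕ} {v₁ v₂ : List ℕ}
    (h1 : IsWmin p q u l v₁) (h2 : IsWmin p q u l v₂) : v₁ = v₂ :=
  lex_antisymm (h1.1.trans h2.1.symm)
    (h1.2.2 v₁ h1.1 h1.2.1 |> fun _ => h2.2.2 v₁ h1.1 h1.2.1)
    (h1.2.2 v₂ h2.1 h2.2.1)

lemma isWmax_unique {p q : ℕ} {u : List ℕ} {l : ℕ} {v₁ v₂ : List ℕ}
    (h1 : IsWmax p q u l v₁) (h2 : IsWmax p q u l v₂) : v₁ = v₂ :=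
  lex_antisymm (h1.1.trans h2.1.symm)
    (h1.2.2 v₂ h2.1 h2.2.1)
    (h2.2.2 v₁ h1.1 h1.2.1)

lemma Vm_eq_range (p q : ℕ) : ∀ (l n : ℕ),
    Vm p q n l = (List.range l).map (fun i => aMin p q ((TMin p q)^[i] n)) := by
  intro l
  induction l with
  | zero => intro n; simp [Vm]
  | succ l IH =>
    intro n
    rw [List.range_succ_eq_map]
    simp only [Vm, List.map_cons, Function.iterate_zero, id_eq, List.map_map]
    congr 1
    rw [IH (TMin p q n)]
    apply List.map_congr_left
    intro i _
    simp [Function.iterate_succ_apply]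

lemma Vmax_eq_range (p q : ℕ) : ∀ (l n : ℕ),
    Vmax p q n l = (List.range l).map (fun i => aMax p q ((TMax p q)^[i] n)) := by
  intro l
  induction l with
  | zero => intro n; simp [Vmax]
  | succ l IH =>
    intro n
    rw [List.range_succ_eq_map]
    simp only [Vmax, List.map_cons, Function.iterate_zero, id_eq, List.map_map]
    congr 1
    rw [IH (TMax p q n)]
    apply List.map_congr_left
    intro i _
    simp [Function.iterate_succ_apply]

lemma eq_of_prefixes {w F : ℕ → ℕ}
    (h : ∀ l, (List.range l).map w = (List.range l).map F) (i : ℕ) : w i = F i := by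
  have h1 := h (i + 1)
  have h2 : ∀ a ∈ List.range (i + 1), w a = F a := by
    rw [← List.map_eq_map_iff]
    exact h1
  exact h2 i (List.mem_range.mpr (Nat.lt_succ_self i))

lemma rep {p q : ℕ} (hq : 0 < q) (hpq : q < p) :
    ∀ n : ℕ, 0 < n → ∃ u : List ℕ, InLang p q u ∧ ratVal p q u = (n : ℚ) ∧ u ≠ [] := by
  intro n
  induction n using Nat.strong_induction_on with
  | _ n IH =>
    intro hn
    have hp : 0 < p := lt_trans hq hpq
    have hmod := Nat.div_add_mod (q * n) p
    set a := q * n % p with ha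
    set m := q * n / p with hm
    have hap : a < p := Nat.mod_lt _ hp
    have hqn : p * m + a = q * n := hmod
    have hmn : m < n := by
      rcases Nat.eq_zero_or_pos m with h0 | h0
      · omega
      · by_contra hc
        push_neg at hc
        have h1 : p * n ≤ p * m := Nat.mul_le_mul (le_refl p) hc
        have h2 : q * n < p * n := Nat.mul_lt_mul_of_lt_of_le hpq (le_refl n) hn
        omega
    have hq0 : (q : ℚ) ≠ 0 := by positivity
    rcases Nat.eq_zero_or_pos m with h0 | h0
    · -- q * n = a, take u = [a]
      have hpm : p * m = 0 := by rw [h0]; ring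
      have han : a = q * n := by omega
      have ha0 : a ≠ 0 := by
        have : 0 < q * n := Nat.mul_pos hq hn
        omega
      refine ⟨[a], ⟨?_, ⟨n, ?_⟩, ?_⟩, ?_, by simp⟩
      · intro b hb; simp at hb; omega
      · rw [ratVal_singleton, han]
        push_cast
        field_simp
      · simp only [List.head?_cons, ne_eq, Option.some.injEq]
        exact ha0
      · rw [ratVal_singleton, han]
        push_cast
        field_simp
    · obtain ⟨u₀, hu₀, hval₀, hne₀⟩ := IH m hmn h0
      refine ⟨u₀ ++ [a], ⟨?_, ⟨n, ?_⟩, ?_⟩, ?_, by simp⟩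
      · intro b hb
        rcases List.mem_append.mp hb with h | h
        · exact hu₀.1 b h
        · simp at h; omega
      · rw [ratVal_append, hval₀, ratVal_singleton]
        simp only [List.length_cons, List.length_nil, pow_one]
        have hc : (p : ℚ) * m + a = q * n := by exact_mod_cast hqn
        rw [zero_add, pow_one, div_mul_eq_mul_div, ← add_div, div_eq_iff hq0]
        linear_combination hc
      · rw [head?_append_left hne₀]
        exact hu₀.2.2
      · rw [ratVal_append, hval₀, ratVal_singleton]
        simp only [List.length_cons, List.length_nil, pow_one]
        have hc : (p : ℚ) * m + a = q * n := by exact_mod_cast hqn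
        rw [zero_add, pow_one, div_mul_eq_mul_div, ← add_div, div_eq_iff hq0]
        linear_combination hc

lemma inLang_nil (p q : ℕ) : InLang p q [] := by
  refine ⟨by simp, ⟨0, by simp [ratVal]⟩, by simp⟩

lemma normal_shift (q d : ℕ) (w w' : ℕ → ℕ) (hw : ∀ i, w i = w' i + d) :
    NormalOver w' (Finset.range q) ↔ NormalOver w (Finset.Ico d (d + q)) := by
  have hinj : Function.Injective (fun a : ℕ => a + d) := fun a b h => by simpa using h
  have hmapinj : Function.Injective (List.map (fun a : ℕ => a + d)) :=
    List.map_injective_iff.mpr hinj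
  have hcard : (Finset.Ico d (d + q)).card = (Finset.range q).card := by
    rw [Nat.card_Ico, Finset.card_range]
    omega
  have hkey : ∀ (l : ℕ) (v' : List ℕ) (m : ℕ),
      ((List.range l).map (fun i => w (m + i)) = v'.map (fun a => a + d)) ↔
      ((List.range l).map (fun i => w' (m + i)) = v') := by
    intro l v' m
    have h1 : (List.range l).map (fun i => w (m + i))
        = ((List.range l).map (fun i => w' (m + i))).map (fun a => a + d) := by
      rw [List.map_map]
      apply List.map_congr_left
      intro i _
      exact hw (m + i)
    rw [h1]
    exact ⟨fun h => hmapinj h, fun h => by rw [h]⟩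
  constructor
  · rintro ⟨hmem, hfreq⟩
    refine ⟨fun n => ?_, ?_⟩
    · have := hmem n
      rw [Finset.mem_range] at this
      rw [Finset.mem_Ico, hw n]
      omega
    · intro l hl v hvlen hvmem
      set v' := v.map (fun a => a - d) with hv'
      have hvv : v = v'.map (fun a => a + d) := by
        rw [hv', List.map_map]
        conv_lhs => rw [← List.map_id v]
        apply List.map_congr_left
        intro a ha
        have := hvmem a ha
        rw [Finset.mem_Ico] at this
        simp only [Function.comp_apply, id_eq]
        omega
      have hv'len : v'.length = l := by rw [hv', List.length_map]; exact hvlen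
      have hv'mem : ∀ a ∈ v', a ∈ Finset.range q := by
        intro a ha
        rw [hv'] at ha
        simp only [List.mem_map] at ha
        obtain ⟨b, hb, rfl⟩ := ha
        have := hvmem b hb
        rw [Finset.mem_Ico] at this
        rw [Finset.mem_range]
        omega
      have hsets : ∀ N, (Finset.range N).filter
            (fun m => (List.range l).map (fun i => w (m + i)) = v)
          = (Finset.range N).filter
            (fun m => (List.range l).map (fun i => w' (m + i)) = v') := by
        intro N
        apply Finset.filter_congr
        intro m _
        rw [hvv]
        exact hkey l v' m
      have htend := hfreq l hl v' hv'len hv'mem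
      rw [show (1 : ℝ) / ((Finset.Ico d (d + q)).card : ℝ) ^ l
          = 1 / ((Finset.range q).card : ℝ) ^ l by rw [hcard]]
      refine htend.congr (fun N => ?_)
      rw [hsets N]
  · rintro ⟨hmem, hfreq⟩
    refine ⟨fun n => ?_, ?_⟩
    · have := hmem n
      rw [Finset.mem_Ico, hw n] at this
      rw [Finset.mem_range]
      omega
    · intro l hl v' hv'len hv'mem
      set v := v'.map (fun a => a + d) with hv
      have hvlen : v.length = l := by rw [hv, List.length_map]; exact hv'len
      have hvmem : ∀ a ∈ v, a ∈ Finset.Ico d (d + q) := by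
        intro a ha
        rw [hv] at ha
        simp only [List.mem_map] at ha
        obtain ⟨b, hb, rfl⟩ := ha
        have := hv'mem b hb
        rw [Finset.mem_range] at this
        rw [Finset.mem_Ico]
        omega
      have hsets : ∀ N, (Finset.range N).filter
            (fun m => (List.range l).map (fun i => w' (m + i)) = v')
          = (Finset.range N).filter
            (fun m => (List.range l).map (fun i => w (m + i)) = v) := by
        intro N
        apply Finset.filter_congr
        intro m _
        rw [hv]
        exact (hkey l v' m).symm
      have htend := hfreq l hl v hvlen hvmem
      rw [show (1 : ℝ) / ((Finset.range q).card : ℝ) ^ l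
          = 1 / ((Finset.Ico d (d + q)).card : ℝ) ^ l by rw [hcard]]
      refine htend.congr (fun N => ?_)
      rw [hsets N]

lemma min_inf_eq {p q : ℕ} (hq : 0 < q) (hpq : q < p) (hco : Nat.Coprime p q)
    {u' : List ℕ} {w' : ℕ → ℕ} {n' : ℕ} (hu' : InLang p q u') (hne : u' ≠ [])
    (hn : ratVal p q u' = (n' : ℚ)) (hinf : IsWminInf p q u' w') :
    ∀ i, w' i = aMin p q ((TMin p q)^[i] n') := by
  apply eq_of_prefixes
  intro l
  have h1 := hinf l
  have h2 := isWmin_Vm hq hpq hco hu' hne hn l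
  have h3 := isWmin_unique h1 h2
  rw [h3, Vm_eq_range]

lemma max_inf_eq {p q : ℕ} (hq : 0 < q) (hpq : q < p) (hco : Nat.Coprime p q)
    {u : List ℕ} {w : ℕ → ℕ} {n : ℕ} (hu : InLang p q u)
    (hn : ratVal p q u = (n : ℚ)) (hinf : IsWmaxInf p q u w) :
    ∀ i, w i = aMax p q ((TMax p q)^[i] n) := by
  apply eq_of_prefixes
  intro l
  have h1 := hinf l
  have h2 := isWmax_Vmax hq hpq hco hu hn l
  have h3 := isWmax_unique h1 h2
  rw [h3, Vmax_eq_range]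

lemma isWminInf_of {p q : ℕ} (hq : 0 < q) (hpq : q < p) (hco : Nat.Coprime p q)
    {u' : List ℕ} {w' : ℕ → ℕ} {n' : ℕ} (hu' : InLang p q u') (hne : u' ≠ [])
    (hn : ratVal p q u' = (n' : ℚ))
    (hw : ∀ i, w' i = aMin p q ((TMin p q)^[i] n')) : IsWminInf p q u' w' := by
  intro l
  have : (List.range l).map w' = Vm p q n' l := by
    rw [Vm_eq_range]
    apply List.map_congr_left
    intro i _
    exact hw i
  rw [this]
  exact isWmin_Vm hq hpq hco hu' hne hn l

lemma isWmaxInf_of {p q : ℕ} (hq : 0 < q) (hpq : q < p) (hco : Nat.Coprime p q)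
    {u : List ℕ} {w : ℕ → ℕ} {n : ℕ} (hu : InLang p q u)
    (hn : ratVal p q u = (n : ℚ))
    (hw : ∀ i, w i = aMax p q ((TMax p q)^[i] n)) : IsWmaxInf p q u w := by
  intro l
  have : (List.range l).map w = Vmax p q n l := by
    rw [Vmax_eq_range]
    apply List.map_congr_left
    intro i _
    exact hw i
  rw [this]
  exact isWmax_Vmax hq hpq hco hu hn l

lemma aMax_eq {p q : ℕ} (hq : 0 < q) (hpq : q < p) (n : ℕ) (i : ℕ) :
    aMax p q ((TMax p q)^[i] n) = aMin p q ((TMin p q)^[i] (n + 1)) + (p - q) := by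
  have h : aMax p q ((TMax p q)^[i] n)
      = aMin p q ((TMax p q)^[i] n + 1) + (p - q) := rfl
  rw [h, iterate_TMax_add_one hq hpq n i]

end Stmt9Aux

/-- For coprime `p > q ≥ 1`: every infinite maximal word `wmax_{p/q}(u)` (`u ∈ L_{p/q}`)
is normal over `{p-q,…,p-1}` if and only if every infinite minimal word `wmin_{p/q}(u)`
(`u ∈ L_{p/q}` nonempty) is normal over `{0,…,q-1}`. -/
theorem stmt9 (p q : ℕ) (hq : 1 ≤ q) (hpq : q < p) (hco : Nat.Coprime p q) :
    (∀ (u : List ℕ) (w : ℕ → ℕ), InLang p q u → IsWmaxInf p q u w →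
      NormalOver w (Finset.Ico (p - q) p)) ↔
    (∀ (u : List ℕ) (w : ℕ → ℕ), InLang p q u → u ≠ [] → IsWminInf p q u w →
      NormalOver w (Finset.range q)) := by
  open Stmt9Aux in
  have hq0 : 0 < q := hq
  have hp : 0 < p := lt_trans hq0 hpq
  have hdq : (p - q) + q = p := by omega
  constructor
  · intro H u' w' hu' hne hinf
    obtain ⟨n', hn'⟩ := hu'.2.1
    have hpos : 0 < n' := by
      have h := ratVal_pos p q hp hq0 hu'.2.2 hne
      rw [hn'] at h
      exact_mod_cast h
    obtain ⟨n, rfl⟩ : ∃ n, n' = n + 1 := ⟨n' - 1, by omega⟩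
    obtain ⟨u, hu, hval⟩ : ∃ u, InLang p q u ∧ ratVal p q u = (n : ℚ) := by
      rcases Nat.eq_zero_or_pos n with h0 | h0
      · refine ⟨[], inLang_nil p q, ?_⟩
        rw [h0, ratVal_nil' p q]
        simp
      · obtain ⟨u, h1, h2, _⟩ := rep hq0 hpq n h0
        exact ⟨u, h1, h2⟩
    have hmineq := min_inf_eq hq0 hpq hco hu' hne hn' hinf
    set w := fun i => w' i + (p - q) with hwdef
    have hweq : ∀ i, w i = aMax p q ((TMax p q)^[i] n) := by
      intro i
      have h1 := hmineq i
      have h2 := aMax_eq hq0 hpq n i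
      show w' i + (p - q) = _
      omega
    have hmax : IsWmaxInf p q u w := isWmaxInf_of hq0 hpq hco hu hval hweq
    have hnormal := H u w hu hmax
    have hico : Finset.Ico (p - q) p = Finset.Ico (p - q) ((p - q) + q) := by rw [hdq]
    rw [hico] at hnormal
    exact (normal_shift q (p - q) w w' (fun i => rfl)).mpr hnormal
  · intro H u w hu hinf
    obtain ⟨n, hn⟩ := hu.2.1
    have hweq : ∀ i, w i = aMax p q ((TMax p q)^[i] n) :=
      max_inf_eq hq0 hpq hco hu hn hinf
    obtain ⟨u', hu', hval', hne'⟩ := rep hq0 hpq (n + 1) (Nat.succ_pos n)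
    set w' := fun i => w i - (p - q) with hw'def
    have hge : ∀ i, (p - q) ≤ w i := by
      intro i
      have h1 := hweq i
      have h2 : aMax p q ((TMax p q)^[i] n)
          = aMin p q ((TMax p q)^[i] n + 1) + (p - q) := rfl
      omega
    have hw : ∀ i, w i = w' i + (p - q) := by
      intro i
      show w i = w i - (p - q) + (p - q)
      have := hge i
      omega
    have hmin : IsWminInf p q u' w' := by
      apply isWminInf_of hq0 hpq hco hu' hne' hval'
      intro i
      have h1 := hweq i
      have h2 := aMax_eq hq0 hpq n i
      show w i - (p - q) = _
      omega
    have hnormal' := H u' w' hu' hne' hmin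
    have hfinal := (normal_shift q (p - q) w w' hw).mp hnormal'
    rw [hdq] at hfinal
    exact hfinal
end

section
/- Let p > q ≥ 1 be coprime integers with q ≥ 2, and let l ≥ 1. For all positive integers m, n one has m ≡ n (mod q^l) if and only if wmin_{p/q}(rep_{p/q}(m), l) = wmin_{p/q}(rep_{p/q}(n), l); consequently, the map from ℤ/q^lℤ to {0,…,q−1}^l sending the residue class of a positive integer n to wmin_{p/q}(rep_{p/q}(n), l) is well defined and bijective. -/
open scoped Classical

/-- `rep_{p/q}(n)`: the word in `L_{p/q}` of valuation `n` (chosen by choice; it is unique). -/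
noncomputable def repW (p q n : ℕ) : List ℕ :=
  if h : ∃ u : List ℕ, InLang p q u ∧ ratVal p q u = n then h.choose else []

/-- `wmin_{p/q}(u,l)` as a function (chosen by choice; it is unique). -/
noncomputable def wminW (p q : ℕ) (u : List ℕ) (l : ℕ) : List ℕ :=
  if h : ∃ v : List ℕ, IsWmin p q u l v then h.choose else []


namespace PQAux
def dmin (p q N : ℕ) : ℕ := (q - p * N % q) % q

def nstep (p q N a : ℕ) : ℕ := (p * N + a) / q

def gmin (p q : ℕ) : ℕ → ℕ → List ℕ
  | _, 0 => []
  | N, l+1 => dmin p q N :: gmin p q (nstep p q N (dmin p q N)) l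

def Chain (p q : ℕ) : ℕ → List ℕ → Prop
  | _, [] => True
  | N, a :: w => (p * N + a) % q = 0 ∧ Chain p q (nstep p q N a) w

variable {p q : ℕ}

lemma dmin_lt (hq : 1 ≤ q) (N : ℕ) : dmin p q N < q :=
  Nat.mod_lt _ hq

lemma dmin_mod (hq : 1 ≤ q) (N : ℕ) : (p * N + dmin p q N) % q = 0 := by
  unfold dmin
  rcases Nat.eq_zero_or_pos (p * N % q) with h | h
  · simp [h, Nat.mod_self, Nat.add_mod, h]
  · have hr : p * N % q < q := Nat.mod_lt _ hq
    rw [Nat.mod_eq_of_lt (by omega : q - p * N % q < q)]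
    have hdm := Nat.div_add_mod (p * N) q
    have : p * N + (q - p * N % q) = q * (p * N / q) + q := by omega
    rw [this]
    simp [Nat.add_mod, Nat.mul_mod_right, Nat.mod_self]

lemma mod_eq_dmin (hq : 1 ≤ q) {N a : ℕ} (h : (p * N + a) % q = 0) :
    a % q = dmin p q N := by
  unfold dmin
  have hr : p * N % q < q := Nat.mod_lt _ hq
  have hs : a % q < q := Nat.mod_lt _ hq
  rw [Nat.add_mod] at h
  rcases lt_or_ge (p * N % q + a % q) q with hlt | hge
  · rw [Nat.mod_eq_of_lt hlt] at h
    have h1 : p * N % q = 0 := by omega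
    have h2 : a % q = 0 := by omega
    simp [h1, h2, Nat.mod_self]
  · rw [Nat.mod_eq_sub_mod hge,
      Nat.mod_eq_of_lt (by omega : p * N % q + a % q - q < q)] at h
    have h1 : 0 < p * N % q := by omega
    rw [Nat.mod_eq_of_lt (by omega : q - p * N % q < q)]
    omega

lemma eq_dmin_of_lt (hq : 1 ≤ q) {N a : ℕ} (ha : a < q) (h : (p * N + a) % q = 0) :
    a = dmin p q N := by
  have := mod_eq_dmin hq (N := N) h
  rwa [Nat.mod_eq_of_lt ha] at this

/-- forward: a chain evaluates to its natural foldl value -/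
lemma foldl_eq_of_chain (hq : 1 ≤ q) :
    ∀ (v : List ℕ) (N : ℕ), Chain p q N v →
      v.foldl (fun (x : ℚ) (a : ℕ) => (p : ℚ) / q * x + (a : ℚ) / q) (N : ℚ)
        = (v.foldl (nstep p q) N : ℕ) := by
  intro v
  induction v with
  | nil => intro N _; simp
  | cons a w ih =>
    intro N hc
    obtain ⟨h1, h2⟩ := hc
    have hq0 : (q : ℚ) ≠ 0 := by positivity
    have hdvd : q ∣ p * N + a := Nat.dvd_of_mod_eq_zero h1
    have hNs : ((nstep p q N a : ℕ) : ℚ) = (p : ℚ) / q * N + (a : ℚ) / q := by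
      rw [nstep, Nat.cast_div hdvd hq0]
      push_cast
      ring
    simpa [List.foldl_cons, ← hNs] using ih (nstep p q N a) h2

lemma foldl_mul_pow (hq : 1 ≤ q) :
    ∀ (v : List ℕ) (x : ℚ), ∃ s : ℕ,
      (q : ℚ) ^ v.length * v.foldl (fun (x : ℚ) (a : ℕ) => (p : ℚ) / q * x + (a : ℚ) / q) x
        = (p : ℚ) ^ v.length * x + s := by
  intro v
  induction v with
  | nil => intro x; exact ⟨0, by simp⟩
  | cons a w ih =>
    intro x
    have hq0 : (q : ℚ) ≠ 0 := by positivity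
    obtain ⟨s, hs⟩ := ih ((p : ℚ) / q * x + (a : ℚ) / q)
    refine ⟨p ^ w.length * a + q * s, ?_⟩
    simp only [List.foldl_cons, List.length_cons]
    have : (q : ℚ) ^ (w.length + 1) * List.foldl (fun (x : ℚ) (a : ℕ) => (p : ℚ) / q * x + (a : ℚ) / q)
        ((p : ℚ) / q * x + (a : ℚ) / q) w
        = (q : ℚ) * ((q : ℚ) ^ w.length * List.foldl (fun (x : ℚ) (a : ℕ) => (p : ℚ) / q * x + (a : ℚ) / q)
          ((p : ℚ) / q * x + (a : ℚ) / q) w) := by ring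
    rw [this, hs]
    push_cast
    field_simp
    ring

/-- backward: if the value is a natural number then the chain condition holds -/
lemma chain_of_foldl (hq : 1 ≤ q) (hco : Nat.Coprime p q) :
    ∀ (v : List ℕ) (N M : ℕ),
      v.foldl (fun (x : ℚ) (a : ℕ) => (p : ℚ) / q * x + (a : ℚ) / q) (N : ℚ) = (M : ℚ) →
      Chain p q N v := by
  intro v
  induction v with
  | nil => intro N M _; trivial
  | cons a w ih =>
    intro N M h
    rw [List.foldl_cons] at h
    have hq0 : (q : ℚ) ≠ 0 := by positivity
    obtain ⟨s, hs⟩ := foldl_mul_pow (p := p) hq w ((p : ℚ) / q * N + (a : ℚ) / q)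
    rw [h] at hs
    have key : (q : ℚ) ^ (w.length + 1) * M = (p : ℚ) ^ w.length * (p * N + a) + q * s := by
      have hqmul : (q : ℚ) * ((p : ℚ) / q * N + (a : ℚ) / q) = (p * N + a : ℚ) := by
        field_simp
      calc (q : ℚ) ^ (w.length + 1) * M = (q : ℚ) * ((q : ℚ) ^ w.length * M) := by ring
        _ = (q : ℚ) * ((p : ℚ) ^ w.length * ((p : ℚ) / q * N + (a : ℚ) / q) + s) := by rw [hs]
        _ = (p : ℚ) ^ w.length * ((q : ℚ) * ((p : ℚ) / q * N + (a : ℚ) / q)) + q * s := by ring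
        _ = _ := by rw [hqmul]
    have keyn : q ^ (w.length + 1) * M = p ^ w.length * (p * N + a) + q * s := by
      exact_mod_cast key
    have hdvd : q ∣ p ^ w.length * (p * N + a) := by
      have h1 : q ∣ q ^ (w.length + 1) * M := Dvd.dvd.mul_right (dvd_pow_self q (by omega)) M
      have h2 : q ∣ q * s := Dvd.intro s rfl
      have h3 := Nat.dvd_sub h1 h2
      rwa [keyn, Nat.add_sub_cancel] at h3
    have hdvd2 : q ∣ p * N + a :=
      (Nat.Coprime.pow_right w.length hco.symm).dvd_of_dvd_mul_left hdvd
    obtain ⟨k, hk⟩ := hdvd2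
    have hmod : (p * N + a) % q = 0 := by rw [hk]; exact Nat.mul_mod_right q k
    have hNs : ((p : ℚ) / q * N + (a : ℚ) / q) = ((nstep p q N a : ℕ) : ℚ) := by
      have : nstep p q N a = k := by rw [nstep, hk]; exact Nat.mul_div_cancel_left k (by omega)
      rw [this]
      field_simp
      exact_mod_cast hk
    rw [hNs] at h
    exact ⟨hmod, ih _ M h⟩

lemma gmin_length (N l : ℕ) : (gmin p q N l).length = l := by
  induction l generalizing N with
  | zero => rfl
  | succ l ih => simp [gmin, ih]

lemma gmin_digits (hq : 1 ≤ q) {N l a : ℕ} (h : a ∈ gmin p q N l) : a < q := by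
  induction l generalizing N with
  | zero => simp [gmin] at h
  | succ l ih =>
    rw [gmin, List.mem_cons] at h
    rcases h with h | h
    · exact h ▸ dmin_lt hq N
    · exact ih h

lemma gmin_chain (hq : 1 ≤ q) (N l : ℕ) : Chain p q N (gmin p q N l) := by
  induction l generalizing N with
  | zero => trivial
  | succ l ih => exact ⟨dmin_mod hq N, ih _⟩

lemma gmin_min (hq : 1 ≤ q) :
    ∀ (v : List ℕ) (N : ℕ), Chain p q N v →
      ¬ List.Lex (· < · : ℕ → ℕ → Prop) v (gmin p q N v.length) := by
  intro v
  induction v with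
  | nil => intro N _ h; rw [List.length_nil] at h; cases h
  | cons a w ih =>
    intro N hc hlex
    obtain ⟨h1, h2⟩ := hc
    have hda : dmin p q N ≤ a := by
      have := mod_eq_dmin hq h1
      have := Nat.mod_le a q
      omega
    rw [List.length_cons, gmin] at hlex
    cases hlex with
    | rel hr => omega
    | cons ht => exact ih (nstep p q N (dmin p q N)) h2 ht

lemma modeq_cancel_q (hq : 1 ≤ q) {x y m : ℕ} (h : q * x ≡ q * y [MOD q * m]) :
    x ≡ y [MOD m] := by
  rw [Nat.modEq_iff_dvd] at h ⊢
  have h' : (q : ℤ) * m ∣ (q : ℤ) * ((y : ℤ) - x) := by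
    have e : ((q * y : ℕ) : ℤ) - ((q * x : ℕ) : ℤ) = (q : ℤ) * ((y : ℤ) - x) := by
      push_cast; ring
    have : ((q * m : ℕ) : ℤ) ∣ ((q * y : ℕ) : ℤ) - ((q * x : ℕ) : ℤ) := h
    rw [e] at this
    exact_mod_cast this
  exact (mul_dvd_mul_iff_left
    (show (q : ℤ) ≠ 0 by exact_mod_cast (by omega : q ≠ 0))).mp h'

lemma nstep_congr (hq : 1 ≤ q) {l N N' a : ℕ} (h : N ≡ N' [MOD q ^ (l + 1)])
    (d1 : q ∣ p * N + a) (d2 : q ∣ p * N' + a) :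
    nstep p q N a ≡ nstep p q N' a [MOD q ^ l] := by
  apply modeq_cancel_q hq
  simp only [nstep]
  rw [Nat.mul_div_cancel' d1, Nat.mul_div_cancel' d2, ← pow_succ']
  exact (h.mul_left p).add_right a

lemma nstep_congr_rev (hq : 1 ≤ q) {l N N' a : ℕ}
    (h : nstep p q N a ≡ nstep p q N' a [MOD q ^ l])
    (d1 : q ∣ p * N + a) (d2 : q ∣ p * N' + a) :
    p * N + a ≡ p * N' + a [MOD q ^ (l + 1)] := by
  have h2 := h.mul_left' q
  simp only [nstep] at h2
  rw [Nat.mul_div_cancel' d1, Nat.mul_div_cancel' d2, ← pow_succ'] at h2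
  exact h2

lemma gmin_congr (hq : 1 ≤ q) :
    ∀ (l N N' : ℕ), N ≡ N' [MOD q ^ l] → gmin p q N l = gmin p q N' l := by
  intro l
  induction l with
  | zero => intro N N' _; rfl
  | succ l ih =>
    intro N N' h
    have hmodq : N ≡ N' [MOD q] :=
      Nat.ModEq.of_dvd (dvd_pow_self q (Nat.succ_ne_zero l)) h
    have hd : dmin p q N = dmin p q N' := by
      unfold dmin
      rw [Nat.mul_mod, hmodq, ← Nat.mul_mod]
    have d1 : q ∣ p * N + dmin p q N := Nat.dvd_of_mod_eq_zero (dmin_mod hq N)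
    have d2 : q ∣ p * N' + dmin p q N := Nat.dvd_of_mod_eq_zero (hd ▸ dmin_mod hq N')
    rw [gmin, gmin, ← hd]
    rw [ih _ _ (nstep_congr hq h d1 d2)]

lemma gmin_inj (hq : 1 ≤ q) (hco : Nat.Coprime p q) :
    ∀ (l N N' : ℕ), gmin p q N l = gmin p q N' l → N ≡ N' [MOD q ^ l] := by
  intro l
  induction l with
  | zero => intro N N' _; simp [Nat.ModEq, Nat.mod_one]
  | succ l ih =>
    intro N N' h
    rw [gmin, gmin, List.cons.injEq] at h
    obtain ⟨hd, ht⟩ := h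
    rw [← hd] at ht
    have hstep := ih _ _ ht
    have d1 : q ∣ p * N + dmin p q N := Nat.dvd_of_mod_eq_zero (dmin_mod hq N)
    have d2 : q ∣ p * N' + dmin p q N := Nat.dvd_of_mod_eq_zero (hd ▸ dmin_mod hq N')
    have h1 := nstep_congr_rev hq hstep d1 d2
    have h2 : p * N ≡ p * N' [MOD q ^ (l + 1)] := h1.add_right_cancel' _
    exact Nat.ModEq.cancel_left_of_coprime
      ((hco.pow_right (l + 1)).symm.gcd_eq_one) h2

lemma gmin_surj (hq : 2 ≤ q) (hpq : q < p) (hco : Nat.Coprime p q) :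
    ∀ (v : List ℕ), (∀ a ∈ v, a < q) → ∃ N : ℕ, gmin p q N v.length = v := by
  intro v
  induction v with
  | nil => exact fun _ => ⟨0, rfl⟩
  | cons a w ih =>
    intro hdig
    obtain ⟨M, hM⟩ := ih (fun b hb => hdig b (List.mem_cons_of_mem a hb))
    have hqL : 1 < q ^ (w.length + 1) := one_lt_pow₀ (by omega) (by omega)
    haveI : NeZero (q ^ (w.length + 1)) := ⟨by omega⟩
    have hcoL : Nat.Coprime p (q ^ (w.length + 1)) := hco.pow_right _
    set u : (ZMod (q ^ (w.length + 1)))ˣ := ZMod.unitOfCoprime p hcoL with hu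
    set c : ZMod (q ^ (w.length + 1)) :=
      ((u⁻¹ : (ZMod (q ^ (w.length + 1)))ˣ) : ZMod (q ^ (w.length + 1))) *
      ((q : ZMod (q ^ (w.length + 1))) * (M : ZMod (q ^ (w.length + 1)))
        - (a : ZMod (q ^ (w.length + 1)))) with hc
    refine ⟨c.val, ?_⟩
    have hunit : (p : ZMod (q ^ (w.length + 1))) * ((u⁻¹ : _ˣ) : ZMod (q ^ (w.length + 1))) = 1 := by
      have h1 : ((u : (ZMod (q ^ (w.length + 1)))ˣ) : ZMod (q ^ (w.length + 1))) = p :=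
        ZMod.coe_unitOfCoprime p hcoL
      rw [← h1, ← Units.val_mul, mul_inv_cancel, Units.val_one]
    have hkey : ((p * c.val + a : ℕ) : ZMod (q ^ (w.length + 1)))
        = ((q * M : ℕ) : ZMod (q ^ (w.length + 1))) := by
      push_cast
      rw [ZMod.natCast_val, ZMod.cast_id, hc, ← mul_assoc, hunit, one_mul]
      ring
    have hmodeq : p * c.val + a ≡ q * M [MOD q ^ (w.length + 1)] :=
      (ZMod.natCast_eq_natCast_iff _ _ _).mp hkey
    have hdvd : q ∣ p * c.val + a := by
      have h1 : q ∣ q ^ (w.length + 1) := dvd_pow_self q (by omega)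
      have h2 : p * c.val + a ≡ q * M [MOD q] := hmodeq.of_dvd h1
      have h3 : q * M ≡ 0 [MOD q] := Nat.modEq_zero_iff_dvd.mpr ⟨M, rfl⟩
      exact Nat.modEq_zero_iff_dvd.mp (h2.trans h3)
    obtain ⟨k, hk⟩ := hdvd
    have hmod0 : (p * c.val + a) % q = 0 := by rw [hk]; exact Nat.mul_mod_right q k
    have hda : a = dmin p q c.val :=
      eq_dmin_of_lt (by omega) (hdig a List.mem_cons_self) hmod0
    have hnstep : nstep p q c.val a = k := by
      rw [nstep, hk, Nat.mul_div_cancel_left _ (by omega : 0 < q)]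
    have hkM : k ≡ M [MOD q ^ w.length] := by
      apply modeq_cancel_q (by omega : 1 ≤ q)
      rw [← pow_succ']
      rw [hk] at hmodeq
      exact hmodeq
    show gmin p q c.val (w.length + 1) = a :: w
    rw [gmin, ← hda, hnstep, gmin_congr (by omega : 1 ≤ q) w.length k M hkM, hM]


lemma lex_trichotomy (v v' : List ℕ) :
    List.Lex (· < · : ℕ → ℕ → Prop) v v' ∨ v = v' ∨ List.Lex (· < · : ℕ → ℕ → Prop) v' v := by
  rcases lt_trichotomy v v' with h | h | h
  · exact Or.inl h
  · exact Or.inr (Or.inl h)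
  · exact Or.inr (Or.inr h)

lemma ratVal_foldl (p q : ℕ) (w : List ℕ) :
    ratVal p q w = w.foldl (fun (x : ℚ) (a : ℕ) => (p : ℚ) / q * x + (a : ℚ) / q) 0 := by
  rw [ratVal]
  generalize (0 : ℚ) = x
  induction w generalizing x with
  | nil => rfl
  | cons a w ih => exact ih _

lemma ratVal_append (p q : ℕ) (u v : List ℕ) :
    ratVal p q (u ++ v) =
      v.foldl (fun (x : ℚ) (a : ℕ) => (p : ℚ) / q * x + (a : ℚ) / q) (ratVal p q u) := by
  rw [ratVal_foldl, ratVal_foldl, List.foldl_append]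

variable {p q : ℕ}

lemma head?_append_ne {u : List ℕ} (hne : u ≠ []) (v : List ℕ) :
    (u ++ v).head? = u.head? := by
  cases u with
  | nil => exact absurd rfl hne
  | cons a w => rfl

lemma inLang_append_iff (hq : 1 ≤ q) (hpq : q < p) (hco : Nat.Coprime p q)
    {u : List ℕ} {N : ℕ} (hu : InLang p q u) (hval : ratVal p q u = N) (hne : u ≠ [])
    (v : List ℕ) :
    InLang p q (u ++ v) ↔ ((∀ a ∈ v, a < p) ∧ Chain p q N v) := by
  constructor
  · rintro ⟨hd, ⟨M, hM⟩, _⟩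
    refine ⟨fun a ha => hd a (List.mem_append_right u ha), ?_⟩
    rw [ratVal_append, hval] at hM
    exact chain_of_foldl hq hco v N M hM
  · rintro ⟨hd, hch⟩
    refine ⟨?_, ⟨v.foldl (nstep p q) N, ?_⟩, ?_⟩
    · intro a ha
      rcases List.mem_append.mp ha with h | h
      exacts [hu.1 a h, hd a h]
    · rw [ratVal_append, hval]
      exact foldl_eq_of_chain hq v N hch
    · rw [head?_append_ne hne]
      exact hu.2.2

lemma rep_exists (hq2 : 2 ≤ q) (hpq : q < p) (hco : Nat.Coprime p q) :
    ∀ n : ℕ, ∃ u : List ℕ, InLang p q u ∧ ratVal p q u = n := by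
  intro n
  induction n using Nat.strong_induction_on with
  | _ n ih =>
    rcases Nat.eq_zero_or_pos n with hn | hn
    · subst hn
      exact ⟨[], ⟨by simp, ⟨0, rfl⟩, by simp⟩, rfl⟩
    · have hp0 : 0 < p := by omega
      set a := q * n % p with ha
      set n' := q * n / p with hn'
      have hlt : n' < n :=
        Nat.div_lt_of_lt_mul (Nat.mul_lt_mul_of_pos_right hpq hn)
      obtain ⟨u', hu', hval'⟩ := ih n' hlt
      have hpn : p * n' + a = q * n := by
        have h := Nat.div_add_mod (q * n) p
        rw [← hn', ← ha] at h
        omega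
      have hvalfull : ratVal p q (u' ++ [a]) = (n : ℚ) := by
        rw [ratVal_append, hval']
        simp only [List.foldl_cons, List.foldl_nil]
        rw [show ((p : ℚ) / q * n' + (a : ℚ) / q) = ((p * n' + a : ℕ) : ℚ) / q by
          push_cast; ring, hpn]
        push_cast
        rw [mul_comm]
        field_simp
      refine ⟨u' ++ [a], ⟨?_, ⟨n, hvalfull⟩, ?_⟩, hvalfull⟩
      · intro b hb
        rcases List.mem_append.mp hb with h | h
        · exact hu'.1 b h
        · rw [List.mem_singleton.mp h]; exact Nat.mod_lt _ hp0
      · cases hu'e : u' with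
        | nil =>
          simp only [hu'e, List.nil_append]
          intro hcontra
          have ha0 : a = 0 := by simpa using hcontra
          have hdvd : p ∣ q * n := Nat.dvd_of_mod_eq_zero (ha ▸ ha0)
          have hdvdn : p ∣ n := Nat.Coprime.dvd_of_dvd_mul_left hco hdvd
          have hge : p ≤ n := Nat.le_of_dvd hn hdvdn
          have h1 : 1 ≤ n' := by
            rw [hn', Nat.le_div_iff_mul_le hp0]
            calc 1 * p = p := Nat.one_mul p
              _ ≤ n := hge
              _ ≤ q * n := Nat.le_mul_of_pos_left n (by omega)
          have h0 : ratVal p q u' = 0 := by rw [hu'e]; rfl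
          rw [h0] at hval'
          have : n' = 0 := by exact_mod_cast hval'.symm
          omega
        | cons b w =>
          rw [← hu'e, head?_append_ne (by simp [hu'e])]
          exact hu'.2.2

lemma repW_spec (hq2 : 2 ≤ q) (hpq : q < p) (hco : Nat.Coprime p q) (n : ℕ) :
    InLang p q (repW p q n) ∧ ratVal p q (repW p q n) = n := by
  have hex := rep_exists hq2 hpq hco n
  rw [repW, dif_pos hex]
  exact hex.choose_spec

lemma repW_ne_nil (hq2 : 2 ≤ q) (hpq : q < p) (hco : Nat.Coprime p q) {n : ℕ} (hn : 0 < n) :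
    repW p q n ≠ [] := by
  intro h
  have hv := (repW_spec hq2 hpq hco n).2
  rw [h] at hv
  have h0 : ratVal p q [] = 0 := rfl
  rw [h0] at hv
  have : n = 0 := by exact_mod_cast hv.symm
  omega

lemma isWmin_gmin (hq2 : 2 ≤ q) (hpq : q < p) (hco : Nat.Coprime p q)
    {u : List ℕ} {N : ℕ} (hu : InLang p q u) (hval : ratVal p q u = N) (hne : u ≠ [])
    (l : ℕ) : IsWmin p q u l (gmin p q N l) := by
  have hq : 1 ≤ q := by omega
  refine ⟨gmin_length N l, ?_, ?_⟩
  · rw [inLang_append_iff hq hpq hco hu hval hne]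
    exact ⟨fun a ha => lt_trans (gmin_digits hq ha) hpq, gmin_chain hq N l⟩
  · intro v' hlen hv' hlex
    rw [inLang_append_iff hq hpq hco hu hval hne] at hv'
    have := gmin_min hq v' N hv'.2
    rw [hlen] at this
    exact this hlex

lemma wminW_eq_gmin (hq2 : 2 ≤ q) (hpq : q < p) (hco : Nat.Coprime p q)
    {u : List ℕ} {N : ℕ} (hu : InLang p q u) (hval : ratVal p q u = N) (hne : u ≠ [])
    (l : ℕ) : wminW p q u l = gmin p q N l := by
  have hg := isWmin_gmin hq2 hpq hco hu hval hne l
  have hex : ∃ v, IsWmin p q u l v := ⟨_, hg⟩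
  rw [wminW, dif_pos hex]
  obtain ⟨hlen, hmem, hmin⟩ := hex.choose_spec
  rcases lex_trichotomy hex.choose (gmin p q N l) with h | h | h
  · exact absurd h (hg.2.2 _ hlen hmem)
  · exact h
  · exact absurd h (hmin _ hg.1 hg.2.1)

lemma wminW_repW (hq2 : 2 ≤ q) (hpq : q < p) (hco : Nat.Coprime p q)
    {n : ℕ} (hn : 0 < n) (l : ℕ) :
    wminW p q (repW p q n) l = gmin p q n l := by
  obtain ⟨h1, h2⟩ := repW_spec hq2 hpq hco n
  exact wminW_eq_gmin hq2 hpq hco h1 h2 (repW_ne_nil hq2 hpq hco hn) l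

end PQAux

/-- For coprime `p > q ≥ 2` and `l ≥ 1`: positive integers `m, n` satisfy
`m ≡ n (mod q^l)` iff `wmin_{p/q}(rep_{p/q}(m),l) = wmin_{p/q}(rep_{p/q}(n),l)`;
consequently, the map `ℤ/q^lℤ → {0,…,q-1}^l`, sending the class of a positive integer `n`
to `wmin_{p/q}(rep_{p/q}(n),l)`, is well defined and bijective. -/
theorem stmt11 (p q : ℕ) (hq : 2 ≤ q) (hpq : q < p) (hco : Nat.Coprime p q)
    (l : ℕ) (hl : 1 ≤ l) :
    (∀ m n : ℕ, 0 < m → 0 < n →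
      (m ≡ n [MOD q ^ l] ↔ wminW p q (repW p q m) l = wminW p q (repW p q n) l)) ∧
    Set.BijOn (fun c : ZMod (q ^ l) => wminW p q (repW p q (c.val + q ^ l)) l)
      Set.univ {v : List ℕ | v.length = l ∧ ∀ a ∈ v, a < q} := by
  have hq1 : 1 ≤ q := by omega
  have hql : 1 < q ^ l := one_lt_pow₀ (by omega) (by omega)
  haveI : NeZero (q ^ l) := ⟨by omega⟩
  constructor
  · intro m n hm hn
    rw [PQAux.wminW_repW hq hpq hco hm l, PQAux.wminW_repW hq hpq hco hn l]
    exact ⟨fun h => PQAux.gmin_congr hq1 l m n h, fun h => PQAux.gmin_inj hq1 hco l m n h⟩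
  · have hfc : ∀ c : ZMod (q ^ l),
        wminW p q (repW p q (c.val + q ^ l)) l = PQAux.gmin p q (c.val + q ^ l) l :=
      fun c => PQAux.wminW_repW hq hpq hco (by omega) l
    refine ⟨?_, ?_, ?_⟩
    · intro c _
      show wminW p q (repW p q (c.val + q ^ l)) l ∈ _
      rw [hfc c]
      exact ⟨PQAux.gmin_length _ l, fun a ha => PQAux.gmin_digits hq1 ha⟩
    · intro c _ c' _ h
      simp only at h
      rw [hfc c, hfc c'] at h
      have h2 := PQAux.gmin_inj hq1 hco l _ _ h
      have h3 : c.val ≡ c'.val [MOD q ^ l] := Nat.ModEq.add_right_cancel' _ h2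
      have h4 : c.val = c'.val := by
        have hv1 : c.val < q ^ l := ZMod.val_lt c
        have hv2 : c'.val < q ^ l := ZMod.val_lt c'
        unfold Nat.ModEq at h3
        rwa [Nat.mod_eq_of_lt hv1, Nat.mod_eq_of_lt hv2] at h3
      exact ZMod.val_injective _ h4
    · intro v hv
      obtain ⟨hvl, hvd⟩ := hv
      obtain ⟨N, hN⟩ := PQAux.gmin_surj hq hpq hco v hvd
      rw [hvl] at hN
      refine ⟨(N : ZMod (q ^ l)), Set.mem_univ _, ?_⟩
      show wminW p q (repW p q ((N : ZMod (q ^ l)).val + q ^ l)) l = v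
      rw [hfc, ← hN]
      apply PQAux.gmin_congr hq1
      have hval : ((N : ZMod (q ^ l)).val) = N % q ^ l := ZMod.val_natCast (q ^ l) N
      rw [hval]
      have h5 : N % q ^ l ≡ N [MOD q ^ l] := Nat.mod_modEq N (q ^ l)
      have h6 : q ^ l ≡ 0 [MOD q ^ l] := Nat.modEq_zero_iff_dvd.mpr dvd_rfl
      simpa using h5.add h6
end
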